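/- arXiv:1910.07606 — 9 statements merged into one kernel-verified Lean document; each statement's English description precedes it below -/
import Mathlib

section
/- Let S be a densely defined positive symmetric operator on a Hilbert space H, and let A = e^{-Q} be a positive self-adjoint extension of S (so Q = -ln A is self-adjoint). Then A is an extremal extension of S (i.e., inf_{f∈D(S)} ⟨A(φ-f), φ-f⟩ = 0 for all φ ∈ D(A)) if and only if D(S) is dense in the Hilbert space H_{-Q} obtained by completing D(e^{-Q}) with respect to the inner product (f,g)_{-Q} = ⟨e^{-Q/2}f, e^{-Q/2}g⟩. -/
open scoped ComplexInnerProductSpace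

noncomputable section

variable {H : Type*} [NormedAddCommGroup H] [InnerProductSpace ℂ H] [CompleteSpace H]

/-- `A` is a nonnegative (possibly unbounded) operator. -/
def LinearPMap.IsNonneg (A : H →ₗ.[ℂ] H) : Prop :=
  ∀ f : A.domain, 0 ≤ (⟪A f, (f : H)⟫).re

/-- `A` is a positive operator. -/
def LinearPMap.IsPositive (A : H →ₗ.[ℂ] H) : Prop :=
  ∀ f : A.domain, (f : H) ≠ 0 → 0 < (⟪A f, (f : H)⟫).re

/-- `S` is a symmetric operator. -/
def LinearPMap.IsSymmetric' (S : H →ₗ.[ℂ] H) : Prop :=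
  ∀ x y : S.domain, ⟪S x, (y : H)⟫ = ⟪(x : H), S y⟫

/-- `R` is a square root of `A`. -/
def IsSqrtOf (R A : H →ₗ.[ℂ] H) : Prop :=
  (∀ x : H, x ∈ A.domain ↔ ∃ hx : x ∈ R.domain, R ⟨x, hx⟩ ∈ R.domain) ∧
  ∀ (x : A.domain) (hx : (x : H) ∈ R.domain) (hx2 : R ⟨(x : H), hx⟩ ∈ R.domain),
    A x = R ⟨R ⟨(x : H), hx⟩, hx2⟩

/-! A self-adjoint square root `R` of `A` turns the quadratic form of `A` into a norm:
`⟪A x, x⟫ = ⟪R (R x), x⟫ = ‖R x‖²`. Hence `⟪A (φ - f), φ - f⟫ < ε²` and `‖R (φ - f)‖ < ε`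
say the same thing, and extremality of `A` is density of `D(S)` for the norm `‖R ·‖` of
`H_{-Q}`. -/

theorem IsSelfAdjoint.isFormalAdjoint_self {𝕜 E : Type*} [RCLike 𝕜] [NormedAddCommGroup E]
    [InnerProductSpace 𝕜 E] [CompleteSpace E] {T : E →ₗ.[𝕜] E} (hT : IsSelfAdjoint T) :
    T.IsFormalAdjoint T := by
  have h := T.adjoint_isFormalAdjoint hT.dense_domain
  rwa [LinearPMap.isSelfAdjoint_def.mp hT] at h

namespace IsSqrtOf

variable {R A : H →ₗ.[ℂ] H}

omit [CompleteSpace H] in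
theorem domain_le (hRA : IsSqrtOf R A) : A.domain ≤ R.domain :=
  fun x hx => ((hRA.1 x).mp hx).1

theorem re_inner_apply_self (hR : IsSelfAdjoint R) (hRA : IsSqrtOf R A) (x : A.domain)
    (hx : (x : H) ∈ R.domain) :
    (⟪A x, (x : H)⟫).re = ‖R ⟨(x : H), hx⟩‖ ^ 2 := by
  have hRx : R ⟨x, hx⟩ ∈ R.domain := ((hRA.1 x).mp x.2).2
  rw [hRA.2 x hx hRx, hR.isFormalAdjoint_self ⟨_, hRx⟩ ⟨x, hx⟩]
  exact inner_self_eq_norm_sq (𝕜 := ℂ) _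

end IsSqrtOf

theorem forall_exists_sq_lt_iff {ι : Type*} {a : ι → ℝ} (ha : ∀ i, 0 ≤ a i) :
    (∀ ε > 0, ∃ i, a i ^ 2 < ε) ↔ ∀ ε > 0, ∃ i, a i < ε := by
  constructor
  · intro h ε hε
    obtain ⟨i, hi⟩ := h (ε ^ 2) (by positivity)
    exact ⟨i, lt_of_pow_lt_pow_left₀ 2 hε.le hi⟩
  · intro h ε hε
    obtain ⟨i, hi⟩ := h √ε (Real.sqrt_pos.mpr hε)
    exact ⟨i, (Real.lt_sqrt (ha i)).mp hi⟩

theorem extremal_iff_dense_in_completion_general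
    (S A sA : H →ₗ.[ℂ] H)
    (hsA : IsSelfAdjoint sA)
    (hsq : IsSqrtOf sA A) (hext : S ≤ A) :
    (∀ φ : A.domain, ∀ ε > 0, ∃ f : S.domain,
        (⟪A (φ - ⟨(f : H), hext.1 f.2⟩), ((φ : H) - (f : H))⟫).re < ε)
    ↔
    (∀ φ : A.domain, ∀ ε > 0, ∃ (f : S.domain)
        (hm : (φ : H) - (f : H) ∈ sA.domain), ‖sA ⟨(φ : H) - (f : H), hm⟩‖ < ε) := by
  have hdom (φ : A.domain) (f : S.domain) : (φ : H) - (f : H) ∈ sA.domain :=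
    hsq.domain_le (φ - ⟨f, hext.1 f.2⟩).2
  have hform (φ : A.domain) (f : S.domain) :
      (⟪A (φ - ⟨(f : H), hext.1 f.2⟩), ((φ : H) - (f : H))⟫).re =
        ‖sA ⟨(φ : H) - (f : H), hdom φ f⟩‖ ^ 2 :=
    hsq.re_inner_apply_self hsA _ _
  simp only [hform, exists_prop_of_true (hdom _ _)]
  exact forall_congr' fun φ => forall_exists_sq_lt_iff fun f => norm_nonneg _

/-- Let `S` be a densely defined positive symmetric operator and let `A = e^{-Q}` be a positive
self-adjoint extension of `S`, with `sA = e^{-Q/2}` its positive self-adjoint square root.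
Then `A` is an extremal extension of `S` (i.e. `inf_{f ∈ D(S)} ⟨A(φ-f), φ-f⟩ = 0` for every
`φ ∈ D(A)`) if and only if `D(S)` is dense in the Hilbert space `H_{-Q}`, i.e. every element
`φ` of `D(e^{-Q})` can be approximated by elements of `D(S)` in the norm
`‖f‖_{-Q} = ‖e^{-Q/2} f‖`. -/
theorem extremal_iff_dense_in_completion
    (S A sA : H →ₗ.[ℂ] H)
    (hSdense : Dense (S.domain : Set H))
    (hSsym : S.IsSymmetric') (hSpos : S.IsPositive)
    (hA : IsSelfAdjoint A) (hApos : A.IsPositive)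
    (hsA : IsSelfAdjoint sA) (hsAnn : sA.IsNonneg)
    (hsq : IsSqrtOf sA A) (hext : S ≤ A) :
    (∀ φ : A.domain, ∀ ε > 0, ∃ f : S.domain,
        (⟪A (φ - ⟨(f : H), hext.1 f.2⟩), ((φ : H) - (f : H))⟫).re < ε)
    ↔
    (∀ φ : A.domain, ∀ ε > 0, ∃ (f : S.domain)
        (hm : (φ : H) - (f : H) ∈ sA.domain), ‖sA ⟨(φ : H) - (f : H), hm⟩‖ < ε) :=
  extremal_iff_dense_in_completion_general S A sA hsA hsq hext
end
end

section
/- Let {φ_n} be a semi-regular sequence in a Hilbert space H (minimal and complete), with biorthogonal sequence {ψ_n}, and let S be the positive symmetric operator Sφ_n = ψ_n extended linearly to D(S) = span{φ_n}. If {φ_n} is a generalized Riesz system, i.e., there exists a self-adjoint operator Q and an orthonormal basis {e_n} with e_n ∈ D(e^{Q/2}) ∩ D(e^{-Q/2}) and φ_n = e^{Q/2}e_n, then the Friedrichs extension A_F of S is a positive operator. -/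
open scoped ComplexInnerProductSpace
open Filter Topology

noncomputable section

variable {H : Type*} [NormedAddCommGroup H] [InnerProductSpace ℂ H] [CompleteSpace H]

/-- The form order `A ≥ B` expressed via square roots. -/
def FormGE (sA sB : H →ₗ.[ℂ] H) : Prop :=
  sA.domain ≤ sB.domain ∧
  ∀ (f : sA.domain) (hf : (f : H) ∈ sB.domain), ‖sB ⟨(f : H), hf⟩‖ ≤ ‖sA f‖

/-- `{e_n}` is an orthonormal basis of `H`. -/
def IsONB (e : ℕ → H) : Prop :=
  Orthonormal ℂ e ∧ Dense ((Submodule.span ℂ (Set.range e) : Submodule ℂ H) : Set H)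

/-- `(A_F, sAF)` is the Friedrichs extension of `S` (with its square root): it is a nonnegative
self-adjoint extension of `S` which is greatest in the form order among all nonnegative
self-adjoint extensions of `S`. -/
def IsFriedrichsExtOf (AF sAF S : H →ₗ.[ℂ] H) : Prop :=
  IsSelfAdjoint AF ∧ AF.IsNonneg ∧ S ≤ AF ∧
  IsSelfAdjoint sAF ∧ sAF.IsNonneg ∧ IsSqrtOf sAF AF ∧
  ∀ B sB : H →ₗ.[ℂ] H, IsSelfAdjoint B → B.IsNonneg → S ≤ B →
    IsSelfAdjoint sB → sB.IsNonneg → IsSqrtOf sB B → FormGE sAF sB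

/-- `{φ_n}` is a generalized Riesz system: `φ_n = e^{Q/2} e_n` for a self-adjoint operator `Q`
and an orthonormal basis `{e_n}` with `e_n ∈ D(e^{Q/2}) ∩ D(e^{-Q/2})`.  Here `E = e^{Q/2}` and
`F = e^{-Q/2}` are encoded as a pair of mutually inverse positive self-adjoint operators
(`Q = 2 ln E` is then self-adjoint). -/
def IsGRS (φ : ℕ → H) : Prop :=
  ∃ (E F : H →ₗ.[ℂ] H) (e : ℕ → H),
    IsSelfAdjoint E ∧ IsSelfAdjoint F ∧ E.IsPositive ∧ F.IsPositive ∧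
    (∀ x : E.domain, ∃ h : E x ∈ F.domain, F ⟨E x, h⟩ = (x : H)) ∧
    (∀ y : F.domain, ∃ h : F y ∈ E.domain, E ⟨F y, h⟩ = (y : H)) ∧
    IsONB e ∧
    ∀ n, ∃ (h1 : e n ∈ E.domain) (_ : e n ∈ F.domain), φ n = E ⟨e n, h1⟩

/-! Write `F = e^{-Q/2}`. Biorthogonality and completeness force `ψ_n = F e_n = F² φ_n`, so `S`
is a restriction of `F²`. Since `F` is self-adjoint, von Neumann's decomposition of `H × H`
into the graph of `F` and its orthogonal complement makes `1 + F²` surjective, and hence `F²`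
is a nonnegative self-adjoint extension of `S` with square root `F`. Maximality of the
Friedrichs extension in the form order gives `D(A_F^{1/2}) ⊆ D(F)` and
`‖F f‖ ≤ ‖A_F^{1/2} f‖`, so `⟪A_F f, f⟫ = ‖A_F^{1/2} f‖² > 0` for `f ≠ 0` because `F` is
positive. -/

theorem Dense.eq_of_inner_left_of_span {𝕜 E ι : Type*} [RCLike 𝕜] [NormedAddCommGroup E]
    [InnerProductSpace 𝕜 E] {φ : ι → E}
    (hφ : Dense ((Submodule.span 𝕜 (Set.range φ) : Submodule 𝕜 E) : Set E)) {x y : E}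
    (h : ∀ i, inner 𝕜 x (φ i) = inner 𝕜 y (φ i)) : x = y :=
  hφ.eq_of_inner_left 𝕜 fun _ hv ↦
    LinearMap.eqOn_span' (f := innerₛₗ 𝕜 x) (g := innerₛₗ 𝕜 y) (by rintro _ ⟨i, rfl⟩; exact h i) hv

namespace LinearPMap

section General

variable {𝕜 E F : Type*} [RCLike 𝕜] [NormedAddCommGroup E] [InnerProductSpace 𝕜 E]
  [NormedAddCommGroup F] [InnerProductSpace 𝕜 F] [CompleteSpace E] [CompleteSpace F]

open WithLp in
theorem IsClosed.exists_graph_decomposition {T : E →ₗ.[𝕜] F} (hT : T.IsClosed)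
    (hd : Dense (T.domain : Set E)) (u : E) (v : F) :
    ∃ (x : T.domain) (y : T†.domain), (x : E) - T† y = u ∧ T x + y = v := by
  -- Project `(u, v)` onto the closed graph of `T` in the `L²` product: the orthogonal
  -- complement of the graph consists of the pairs `(-T† y, y)`.
  let K := T.graph.comap (WithLp.linearEquiv 2 𝕜 (E × F)).toLinearMap
  have : CompleteSpace K :=
    (hT.preimage (prod_continuous_ofLp 2 E F)).completeSpace_coe
  obtain ⟨k, hk, w, hw, huv⟩ := K.exists_add_mem_mem_orthogonal (toLp 2 (u, v))
  obtain ⟨x, hx1, hx2⟩ := T.mem_graph_iff.mp hk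
  have hw' (z : T.domain) : inner 𝕜 (-(ofLp w).1) (z : E) = inner 𝕜 (ofLp w).2 (T z) := by
    have := Submodule.inner_left_of_mem_orthogonal (K := K) (u := toLp 2 ((z : E), T z))
      (T.mem_graph z) hw
    rw [prod_inner_apply] at this
    rw [inner_neg_left]
    linear_combination -this
  have hy : (ofLp w).2 ∈ T†.domain := mem_adjoint_domain_of_exists _ ⟨_, hw'⟩
  refine ⟨x, ⟨_, hy⟩, ?_, ?_⟩
  · rw [adjoint_apply_eq hd _ hw', sub_neg_eq_add, hx1]
    exact (congrArg (fun p ↦ (ofLp p).1) huv).symm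
  · rw [hx2]
    exact (congrArg (fun p ↦ (ofLp p).2) huv).symm

theorem _root_.IsSelfAdjoint.isFormalAdjoint {A : E →ₗ.[𝕜] E} (hA : IsSelfAdjoint A) :
    A.IsFormalAdjoint A := by
  have := adjoint_isFormalAdjoint hA.dense_domain (T := A)
  rwa [isSelfAdjoint_def.mp hA] at this

theorem _root_.IsSelfAdjoint.exists_graph_decomposition {A : E →ₗ.[𝕜] E} (hA : IsSelfAdjoint A)
    (u v : E) : ∃ x y : A.domain, (x : E) - A y = u ∧ A x + y = v := by
  have := hA.isClosed.exists_graph_decomposition hA.dense_domain u v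
  rwa [isSelfAdjoint_def.mp hA] at this

end General

section Square

variable {R E : Type*} [Ring R] [AddCommGroup E] [Module R E]

/-- `A ∘ A` on its maximal domain `{x ∈ D(A) | A x ∈ D(A)}`. -/
def sq (A : E →ₗ.[R] E) : E →ₗ.[R] E :=
  A.comp (A.domRestrict ((A.domain.comap A.toFun).map A.domain.subtype)) fun x ↦ by
    obtain ⟨y, hy, hyx⟩ := Submodule.mem_map.mp x.2.1
    rw [domRestrict_apply hyx.symm]
    exact hy

theorem mem_sq_domain {A : E →ₗ.[R] E} {x : E} :
    x ∈ A.sq.domain ↔ ∃ h : x ∈ A.domain, A ⟨x, h⟩ ∈ A.domain := by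
  constructor
  · rintro ⟨⟨y, hy, rfl⟩, -⟩
    exact ⟨y.2, hy⟩
  · rintro ⟨h, h'⟩
    exact ⟨⟨⟨x, h⟩, h', rfl⟩, h⟩

theorem sq_apply {A : E →ₗ.[R] E} {x : E} (hx : x ∈ A.sq.domain) (h : x ∈ A.domain)
    (h' : A ⟨x, h⟩ ∈ A.domain) : A.sq ⟨x, hx⟩ = A ⟨A ⟨x, h⟩, h'⟩ :=
  rfl

end Square

section SelfAdjoint

variable {𝕜 E : Type*} [RCLike 𝕜] [NormedAddCommGroup E] [InnerProductSpace 𝕜 E]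
  [CompleteSpace E] {A : E →ₗ.[𝕜] E}

theorem isSelfAdjoint_of_exists_add_apply_eq (hd : Dense (A.domain : Set E))
    (hA : A.IsFormalAdjoint A) (hsurj : ∀ u : E, ∃ x : A.domain, (x : E) + A x = u) :
    IsSelfAdjoint A := by
  refine isSelfAdjoint_def.mpr (le_antisymm (le_of_eqLocus_ge fun y hy ↦ ?_) (hA.le_adjoint hd))
  obtain ⟨x, hx⟩ := hsurj (y + A† ⟨y, hy⟩)
  -- `y - x` is orthogonal to the range of `1 + A`, which is everything.
  have horth (u : A.domain) : inner 𝕜 ((u : E) + A u) (y - x) = 0 := by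
    rw [inner_add_left, inner_sub_right, inner_sub_right,
      (adjoint_isFormalAdjoint hd).symm u ⟨y, hy⟩, hA u x]
    have h := congrArg (inner 𝕜 (u : E)) hx
    rw [inner_add_right, inner_add_right] at h
    linear_combination -h
  have hxy : (x : E) = y := by
    obtain ⟨u, hu⟩ := hsurj (y - x)
    have := horth u
    rw [hu, inner_self_eq_zero, sub_eq_zero] at this
    exact this.symm
  refine ⟨hy, hxy ▸ x.2, ?_⟩
  rw [show (⟨y, hxy ▸ x.2⟩ : A.domain) = x from Subtype.ext hxy.symm]
  rw [hxy] at hx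
  exact (add_left_cancel hx).symm

theorem _root_.IsSelfAdjoint.isFormalAdjoint_sq (hA : IsSelfAdjoint A) :
    A.sq.IsFormalAdjoint A.sq := by
  rintro ⟨x, hx⟩ ⟨y, hy⟩
  obtain ⟨hx1, hx2⟩ := mem_sq_domain.mp hx
  obtain ⟨hy1, hy2⟩ := mem_sq_domain.mp hy
  rw [sq_apply hx hx1 hx2, sq_apply hy hy1 hy2]
  exact (hA.isFormalAdjoint ⟨_, hx2⟩ ⟨y, hy1⟩).trans (hA.isFormalAdjoint ⟨x, hx1⟩ ⟨_, hy2⟩)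

theorem _root_.IsSelfAdjoint.inner_sq_apply_self (hA : IsSelfAdjoint A) {x : E}
    (hx : x ∈ A.sq.domain) (h : x ∈ A.domain) :
    inner 𝕜 (A.sq ⟨x, hx⟩) x = inner 𝕜 (A ⟨x, h⟩) (A ⟨x, h⟩) :=
  hA.isFormalAdjoint ⟨_, (mem_sq_domain.mp hx).2⟩ ⟨x, h⟩

theorem _root_.IsSelfAdjoint.exists_add_sq_apply_eq (hA : IsSelfAdjoint A) (u : E) :
    ∃ x : A.sq.domain, (x : E) + A.sq x = u := by
  obtain ⟨x, y, hu, h0⟩ := hA.exists_graph_decomposition u 0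
  have hy : (y : E) = -A x := eq_neg_of_add_eq_zero_right h0
  have hAx : A x ∈ A.domain := by
    simpa [hy] using A.domain.neg_mem y.2
  refine ⟨⟨x, mem_sq_domain.mpr ⟨x.2, hAx⟩⟩, ?_⟩
  rw [sq_apply _ x.2 hAx]
  rwa [show y = -⟨A x, hAx⟩ from Subtype.ext hy, map_neg, sub_neg_eq_add] at hu

end SelfAdjoint

theorem dense_domain_of_isNonneg_of_exists_add_apply_eq {A : H →ₗ.[ℂ] H} (hA : A.IsNonneg)
    (hsurj : ∀ u : H, ∃ x : A.domain, (x : H) + A x = u) : Dense (A.domain : Set H) := by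
  rw [Submodule.dense_iff_topologicalClosure_eq_top, Submodule.topologicalClosure_eq_top_iff,
    Submodule.eq_bot_iff]
  intro g hg
  obtain ⟨u, rfl⟩ := hsurj g
  have h0 : ⟪(u : H) + A u, u⟫ = 0 := Submodule.inner_left_of_mem_orthogonal u.2 hg
  rw [inner_add_left, inner_self_eq_norm_sq_to_K] at h0
  have hnorm : ‖(u : H)‖ ^ 2 + (⟪A u, u⟫).re = 0 := by
    simpa [← Complex.ofReal_pow] using congrArg Complex.re h0
  have hu : u = 0 := by
    rw [← Submodule.coe_eq_zero, ← norm_eq_zero]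
    nlinarith [hA u, norm_nonneg (u : H)]
  simp [hu]

theorem _root_.IsSelfAdjoint.sq_isNonneg {A : H →ₗ.[ℂ] H} (hA : IsSelfAdjoint A) :
    A.sq.IsNonneg := by
  rintro ⟨x, hx⟩
  rw [hA.inner_sq_apply_self hx (mem_sq_domain.mp hx).1]
  exact inner_self_nonneg (𝕜 := ℂ)

theorem _root_.IsSelfAdjoint.sq {A : H →ₗ.[ℂ] H} (hA : IsSelfAdjoint A) : IsSelfAdjoint A.sq :=
  isSelfAdjoint_of_exists_add_apply_eq
    (dense_domain_of_isNonneg_of_exists_add_apply_eq hA.sq_isNonneg hA.exists_add_sq_apply_eq)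
    hA.isFormalAdjoint_sq hA.exists_add_sq_apply_eq

omit [CompleteSpace H] in
theorem isSqrtOf_sq (A : H →ₗ.[ℂ] H) : IsSqrtOf A A.sq :=
  ⟨fun _ ↦ mem_sq_domain, fun x hx hx2 ↦ sq_apply x.2 hx hx2⟩

omit [CompleteSpace H] in
theorem IsPositive.isNonneg {A : H →ₗ.[ℂ] H} (hA : A.IsPositive) : A.IsNonneg := by
  intro x
  rcases eq_or_ne (x : H) 0 with hx | hx
  · simp [hx]
  · exact (hA x hx).le

end LinearPMap

theorem isPositive_of_isSqrtOf_of_formGE {A R F : H →ₗ.[ℂ] H} (hR : IsSelfAdjoint R)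
    (hRA : IsSqrtOf R A) (hRF : FormGE R F) (hF : F.IsPositive) : A.IsPositive := by
  intro f hf
  obtain ⟨h, h'⟩ := (hRA.1 f).mp f.2
  have hinner : ⟪A f, f⟫ = ⟪R ⟨f, h⟩, R ⟨f, h⟩⟫ := by
    rw [hRA.2 f h h']
    exact hR.isFormalAdjoint ⟨_, h'⟩ ⟨f, h⟩
  have hFf : F ⟨f, hRF.1 h⟩ ≠ 0 := fun h0 ↦ by simpa [h0] using hF ⟨f, hRF.1 h⟩ hf
  have hRf : R ⟨f, h⟩ ≠ 0 :=
    norm_pos_iff.mp ((norm_pos_iff.mpr hFf).trans_le (hRF.2 ⟨f, h⟩ _))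
  rw [hinner]
  exact re_inner_self_pos (𝕜 := ℂ) |>.mpr hRf

theorem IsGRS.exists_isPositive_sq_apply_eq {φ ψ : ℕ → H} (hGRS : IsGRS φ)
    (hbi : ∀ n m, ⟪ψ n, φ m⟫ = if n = m then (1 : ℂ) else 0)
    (hcomp : Dense ((Submodule.span ℂ (Set.range φ) : Submodule ℂ H) : Set H)) :
    ∃ F : H →ₗ.[ℂ] H, IsSelfAdjoint F ∧ F.IsPositive ∧
      ∀ n, ∃ h : φ n ∈ F.sq.domain, F.sq ⟨φ n, h⟩ = ψ n := by
  obtain ⟨E, F, e, -, hF, -, hFpos, hFE, -, ⟨he, -⟩, hφ⟩ := hGRS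
  choose heE heF hφE using hφ
  have hφF (n : ℕ) : ∃ h : φ n ∈ F.domain, F ⟨φ n, h⟩ = e n := by
    rw [hφE n]
    exact hFE ⟨e n, heE n⟩
  choose hφF hFφ using hφF
  have hψ (n : ℕ) : ψ n = F ⟨e n, heF n⟩ := by
    refine hcomp.eq_of_inner_left_of_span fun m ↦ ?_
    rw [hbi, hF.isFormalAdjoint ⟨e n, heF n⟩ ⟨φ m, hφF m⟩, hFφ m, orthonormal_iff_ite.mp he n m]
  refine ⟨F, hF, hFpos, fun n ↦ ⟨LinearPMap.mem_sq_domain.mpr ⟨hφF n, hFφ n ▸ heF n⟩, ?_⟩⟩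
  rw [LinearPMap.sq_apply _ (hφF n) (hFφ n ▸ heF n), hψ n]
  congr 1
  exact Subtype.ext (hFφ n)

/-- If a semi-regular sequence `{φ_n}` (minimal with biorthogonal sequence `{ψ_n}`, and complete)
is a generalized Riesz system, then the Friedrichs extension `A_F` of the operator `S`
(`Sφ_n = ψ_n` on `span{φ_n}`) is a positive operator. -/
theorem friedrichs_positive_of_GRS
    (φ ψ : ℕ → H)
    (hbi : ∀ n m, ⟪ψ n, φ m⟫ = if n = m then (1 : ℂ) else 0)
    (hcomp : Dense ((Submodule.span ℂ (Set.range φ) : Submodule ℂ H) : Set H))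
    (S : H →ₗ.[ℂ] H)
    (hdom : S.domain = Submodule.span ℂ (Set.range φ))
    (hS : ∀ n, ∃ h : φ n ∈ S.domain, S ⟨φ n, h⟩ = ψ n)
    (AF sAF : H →ₗ.[ℂ] H) (hAF : IsFriedrichsExtOf AF sAF S)
    (hGRS : IsGRS φ) : AF.IsPositive := by
  obtain ⟨-, -, -, hsAF, -, hsqrt, hmax⟩ := hAF
  obtain ⟨F, hF, hFpos, hFψ⟩ := hGRS.exists_isPositive_sq_apply_eq hbi hcomp
  have hSF : S ≤ F.sq := by
    refine LinearPMap.le_of_eqLocus_ge (hdom ▸ Submodule.span_le.mpr ?_)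
    rintro _ ⟨n, rfl⟩
    obtain ⟨hSn, hSψ⟩ := hS n
    obtain ⟨hFn, hFψn⟩ := hFψ n
    exact ⟨hSn, hFn, hSψ.trans hFψn.symm⟩
  exact isPositive_of_isSqrtOf_of_formGE hsAF hsqrt
    (hmax F.sq F hF.sq hF.sq_isNonneg hSF hF hFpos.isNonneg (LinearPMap.isSqrtOf_sq F)) hFpos
end
end

section
/- Let {φ_n} be a semi-regular sequence with associated symmetric operator S. The Friedrichs extension A_F of S is positive if and only if the closure S̄ of S is positive and the conditions lim_{n→∞} ⟨S̄f_n, f_n⟩ = 0 and lim_{n→∞} f_n = g (with f_n ∈ D(S̄)) imply g = 0. -/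
/-! If `A_F` is not positive, some `f ≠ 0` has `⟪A_F f, f⟫ = ‖A_F^{1/2} f‖² = 0`.
Biorthogonality makes the form of `S` a Gram form, `⟪S x, y⟫ = ⟪Λ x, Λ y⟫` with `Λ φ_n`
orthonormal. The closure `G` of the graph `{(x, Λ x)}` in `H ⊕₂ H` is the form closure; with
`J : G → H` the first projection, `C = J J*` is `(1 + S_F)⁻¹` for a nonnegative self-adjoint
extension `S_F` of `S`. Writing `C = s²` and `1 - C = d²` by functional calculus, `S_F = d² s⁻²`
has the square root `d s⁻¹`. Maximality of `A_F` in the form order gives `d s⁻¹ f = 0`, hence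
`C f = f`, hence `(f, 0) ∈ G`: `f` is a limit of `x_n ∈ D(S)` with `⟪S x_n, x_n⟫ → 0`, and the
condition forces `f = 0`. Conversely, along such a sequence `A_F^{1/2} x_n → 0`; as `A_F^{1/2}` is
closed, the limit is a null vector of `A_F`. -/

open scoped ComplexInnerProductSpace
open Filter Topology

noncomputable section

variable {H : Type*} [NormedAddCommGroup H] [InnerProductSpace ℂ H] [CompleteSpace H]

theorem LinearPMap.IsClosed.closure_le {R E F : Type*} [CommRing R] [AddCommGroup E]
    [AddCommGroup F] [Module R E] [Module R F] [TopologicalSpace E] [TopologicalSpace F]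
    [ContinuousAdd E] [ContinuousAdd F] [TopologicalSpace R] [ContinuousSMul R E]
    [ContinuousSMul R F] {f g : E →ₗ.[R] F} (hg : g.IsClosed) (h : f ≤ g) : f.closure ≤ g :=
  LinearPMap.le_of_le_graph <| by
    rw [← (hg.isClosable.leIsClosable h).graph_closure_eq_closure_graph]
    exact Submodule.topologicalClosure_minimal _ (LinearPMap.le_graph_of_le h) hg

theorem LinearPMap.IsClosed.exists_apply_eq_of_tendsto {R E F : Type*} [CommRing R]
    [AddCommGroup E] [AddCommGroup F] [Module R E] [Module R F] [TopologicalSpace E]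
    [TopologicalSpace F] {f : E →ₗ.[R] F} (hf : f.IsClosed) {x : ℕ → f.domain} {a : E} {b : F}
    (hxa : Tendsto (fun n => (x n : E)) atTop (𝓝 a))
    (hxb : Tendsto (fun n => f (x n)) atTop (𝓝 b)) :
    ∃ ha : a ∈ f.domain, f ⟨a, ha⟩ = b := by
  have hmem : (a, b) ∈ f.graph :=
    hf.mem_of_tendsto (hxa.prodMk_nhds hxb) (.of_forall fun n => f.mem_graph (x n))
  obtain ⟨⟨y, hy⟩, hya, hyb⟩ := f.mem_graph_iff.mp hmem
  obtain rfl : y = a := hya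
  exact ⟨hy, hyb⟩

theorem IsSelfAdjoint.isFormalAdjoint_s5 {𝕜 E : Type*} [RCLike 𝕜] [NormedAddCommGroup E]
    [InnerProductSpace 𝕜 E] [CompleteSpace E] {A : E →ₗ.[𝕜] E} (hA : IsSelfAdjoint A) :
    A.IsFormalAdjoint A := by
  have h := LinearPMap.adjoint_isFormalAdjoint hA.dense_domain
  rwa [LinearPMap.isSelfAdjoint_def.mp hA] at h

theorem LinearPMap.apply_eq_of_le {R E F : Type*} [Ring R] [AddCommGroup E] [AddCommGroup F]
    [Module R E] [Module R F] {f g : E →ₗ.[R] F} (h : f ≤ g) (x : f.domain) :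
    f x = g ⟨x, h.1 x.2⟩ :=
  h.2 rfl

theorem LinearPMap.IsPositive.of_le {E : Type*} [NormedAddCommGroup E] [InnerProductSpace ℂ E]
    {A B : E →ₗ.[ℂ] E} (hB : B.IsPositive) (h : A ≤ B) : A.IsPositive := fun f hf => by
  rw [LinearPMap.apply_eq_of_le h]
  exact hB _ hf

theorem FormGE.apply_eq_zero {E : Type*} [NormedAddCommGroup E] [InnerProductSpace ℂ E]
    {sA sB : E →ₗ.[ℂ] E} (h : FormGE sA sB) {f : sA.domain} (hf : sA f = 0) :
    sB ⟨f, h.1 f.2⟩ = 0 :=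
  norm_le_zero_iff.mp (by simpa [hf] using h.2 f (h.1 f.2))

theorem IsSqrtOf.domain_le_s5 {E : Type*} [NormedAddCommGroup E] [InnerProductSpace ℂ E]
    {R A : E →ₗ.[ℂ] E} (hsq : IsSqrtOf R A) : A.domain ≤ R.domain :=
  fun x hx => ((hsq.1 x).mp hx).1

theorem IsSqrtOf.re_inner_eq_norm_sq {R A : H →ₗ.[ℂ] H} (hsq : IsSqrtOf R A)
    (hR : IsSelfAdjoint R) (f : A.domain) (hf : (f : H) ∈ R.domain) :
    (⟪A f, (f : H)⟫).re = ‖R ⟨f, hf⟩‖ ^ 2 := by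
  obtain ⟨_, hf2⟩ := (hsq.1 f).mp f.2
  rw [hsq.2 f hf hf2, hR.isFormalAdjoint_s5 ⟨_, hf2⟩ ⟨f, hf⟩]
  simpa using inner_self_eq_norm_sq (𝕜 := ℂ) (R ⟨f, hf⟩)

theorem IsSqrtOf.apply_eq_zero_of_re_inner_eq_zero {R A : H →ₗ.[ℂ] H} (hsq : IsSqrtOf R A)
    (hR : IsSelfAdjoint R) {f : A.domain} (hf : (⟪A f, (f : H)⟫).re = 0) :
    R ⟨f, hsq.domain_le_s5 f.2⟩ = 0 := by
  rw [hsq.re_inner_eq_norm_sq hR f (hsq.domain_le_s5 f.2), sq_eq_zero_iff] at hf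
  exact norm_eq_zero.mp hf

theorem IsSqrtOf.eq_zero_of_tendsto {R A : H →ₗ.[ℂ] H} (hsq : IsSqrtOf R A)
    (hR : IsSelfAdjoint R) (hA : A.IsPositive) {f : ℕ → A.domain} {g : H}
    (hform : Tendsto (fun n => (⟪A (f n), (f n : H)⟫).re) atTop (𝓝 0))
    (hfg : Tendsto (fun n => (f n : H)) atTop (𝓝 g)) : g = 0 := by
  set x : ℕ → R.domain := fun n => ⟨f n, hsq.domain_le_s5 (f n).2⟩
  have hRx : Tendsto (fun n => R (x n)) atTop (𝓝 0) := by
    rw [tendsto_zero_iff_norm_tendsto_zero]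
    have hsq' : Tendsto (fun n => ‖R (x n)‖ ^ 2) atTop (𝓝 0) :=
      hform.congr fun n => hsq.re_inner_eq_norm_sq hR (f n) _
    simpa using hsq'.sqrt
  obtain ⟨hg, hRg⟩ := hR.isClosed.exists_apply_eq_of_tendsto hfg hRx
  have hRg' : R ⟨g, hg⟩ ∈ R.domain := hRg ▸ R.domain.zero_mem
  have hAg : g ∈ A.domain := (hsq.1 g).mpr ⟨hg, hRg'⟩
  by_contra hg0
  have hpos := hA ⟨g, hAg⟩ hg0
  rw [hsq.2 ⟨g, hAg⟩ hg hRg'] at hpos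
  simp [show (⟨R ⟨g, hg⟩, hRg'⟩ : R.domain) = 0 from Subtype.ext hRg] at hpos

section fracPMap

variable {E : Type*} [NormedAddCommGroup E] [InnerProductSpace ℂ E]

/-- The operator `D T⁻¹` with domain `range T`, sending `T u` to `D u`. -/
def fracPMap (T D : E →L[ℂ] E) (hT : Function.Injective T) : E →ₗ.[ℂ] E :=
  ⟨(T : E →ₗ[ℂ] E).range,
    (D : E →ₗ[ℂ] E) ∘ₗ (LinearEquiv.ofInjective (T : E →ₗ[ℂ] E) hT).symm.toLinearMap⟩

variable {T D : E →L[ℂ] E} {hT : Function.Injective T}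

theorem fracPMap_apply (x : (fracPMap T D hT).domain) {u : E} (hu : T u = x) :
    fracPMap T D hT x = D u := by
  obtain rfl : x = LinearEquiv.ofInjective (T : E →ₗ[ℂ] E) hT u := Subtype.ext hu.symm
  show D ((LinearEquiv.ofInjective (T : E →ₗ[ℂ] E) hT).symm _) = D u
  rw [LinearEquiv.symm_apply_apply]

theorem le_fracPMap {S : E →ₗ.[ℂ] E} (hTD : T + D = 1) (hST : ∀ x : S.domain, T (x + S x) = x) :
    S ≤ fracPMap T D hT := by
  refine ⟨fun x hx => ⟨_, hST ⟨x, hx⟩⟩, fun x y hxy => ?_⟩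
  rw [fracPMap_apply y ((hST x).trans hxy)]
  have h := DFunLike.congr_fun hTD (x + S x)
  change T (x + S x) + D (x + S x) = x + S x at h
  rw [hST] at h
  exact (add_left_cancel h).symm

theorem isSqrtOf_fracPMap {s d : E →L[ℂ] E} {hs : Function.Injective s} (hsd : Commute s d)
    (hsum : s * s + d * d = 1) :
    IsSqrtOf (fracPMap s d hs) (fracPMap (s * s) (d * d) (hs.comp hs)) := by
  have hds : ∀ u, d (s u) = s (d u) := fun u => (DFunLike.congr_fun hsd.eq u).symm
  refine ⟨fun x => ⟨?_, ?_⟩, fun x hx hx2 => ?_⟩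
  · rintro ⟨u, rfl⟩
    refine ⟨⟨s u, rfl⟩, ?_⟩
    rw [fracPMap_apply _ rfl]
    change d (s u) ∈ (fracPMap s d hs).domain
    rw [hds]
    exact ⟨d u, rfl⟩
  · rintro ⟨⟨u, hu⟩, w, hw⟩
    change s w = fracPMap s d hs ⟨x, u, hu⟩ at hw
    rw [fracPMap_apply _ hu] at hw
    refine ⟨s u + d w, ?_⟩
    show s (s (s u + d w)) = x
    rw [map_add, ← hds w, hw, ← hu]
    exact congrArg s (DFunLike.congr_fun hsum u)
  · obtain ⟨u, hu⟩ := x.2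
    have h1 : fracPMap s d hs ⟨x, hx⟩ = s (d u) := by
      rw [fracPMap_apply (u := s u) _ hu, hds]
    rw [fracPMap_apply x hu, fracPMap_apply (u := d u) _ h1.symm]
    rfl

theorem mul_self_apply_eq_of_fracPMap_eq_zero {s d : E →L[ℂ] E} {hs : Function.Injective s}
    (hsum : s * s + d * d = 1) (x : (fracPMap s d hs).domain) (hx : fracPMap s d hs x = 0) :
    (s * s) x = x := by
  obtain ⟨u, hu⟩ := x.2
  rw [fracPMap_apply x hu] at hx
  have hu' : s (s u) = u := by
    simpa [hx] using DFunLike.congr_fun hsum u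
  rw [← hu]
  exact congrArg s hu'

variable [CompleteSpace E]

theorem IsSelfAdjoint.dense_range {A : E →L[ℂ] E} (hA : IsSelfAdjoint A)
    (hinj : Function.Injective A) : Dense ((A : E →ₗ[ℂ] E).range : Set E) := by
  rw [Submodule.dense_iff_topologicalClosure_eq_top, Submodule.topologicalClosure_eq_top_iff,
    ContinuousLinearMap.orthogonal_range, hA.adjoint_eq]
  exact LinearMap.ker_eq_bot_of_injective hinj

theorem fracPMap_isFormalAdjoint (hTs : IsSelfAdjoint T) (hDs : IsSelfAdjoint D)
    (hTD : Commute T D) : (fracPMap T D hT).IsFormalAdjoint (fracPMap T D hT) := by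
  rintro x y
  obtain ⟨u, hu⟩ := x.2
  obtain ⟨v, hv⟩ := y.2
  rw [fracPMap_apply x hu, fracPMap_apply y hv, ← hu, ← hv]
  calc ⟪D u, T v⟫ = ⟪(T * D) u, v⟫ := (hTs.isSymmetric _ _).symm
    _ = ⟪(D * T) u, v⟫ := by rw [hTD.eq]
    _ = ⟪T u, D v⟫ := hDs.isSymmetric _ _

theorem isNonneg_fracPMap (hTs : IsSelfAdjoint T) (hTD : 0 ≤ T * D) :
    (fracPMap T D hT).IsNonneg := by
  rintro x
  obtain ⟨u, hu⟩ := x.2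
  rw [fracPMap_apply x hu, ← hu, ← hTs.isSymmetric]
  exact ((ContinuousLinearMap.nonneg_iff_isPositive _).mp hTD).re_inner_nonneg_left u

/-- Beyond symmetry, self-adjointness comes from `T` and `D` being coprime: `a T + b D = 1`. -/
theorem fracPMap_adjoint_le {a b : E →L[ℂ] E} (hTs : IsSelfAdjoint T) (hDs : IsSelfAdjoint D)
    (haT : Commute a T) (haD : Commute a D) (hbT : Commute b T) (hbD : Commute b D)
    (hab : a * T + b * D = 1) : (fracPMap T D hT).adjoint ≤ fracPMap T D hT := by
  set X := fracPMap T D hT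
  have key : ∀ y : X.adjoint.domain, ∃ w, T w = y ∧ X.adjoint y = D w := by
    intro y
    set z := X.adjoint y
    set y₀ : E := (y : E)
    have hTz : T z = D y₀ := by
      refine ext_inner_right ℂ fun u => ?_
      have h := LinearPMap.adjoint_isFormalAdjoint (hTs.dense_range hT) y ⟨T u, u, rfl⟩
      rw [fracPMap_apply _ rfl] at h
      calc ⟪T z, u⟫ = ⟪z, T u⟫ := hTs.isSymmetric z u
        _ = ⟪y₀, D u⟫ := h
        _ = ⟪D y₀, u⟫ := (hDs.isSymmetric _ _).symm
    have hTa : T (a y₀) = a (T y₀) := (DFunLike.congr_fun haT.eq y₀).symm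
    have hTb : T (b z) = b (T z) := (DFunLike.congr_fun hbT.eq z).symm
    have hDa : D (a y₀) = a (D y₀) := (DFunLike.congr_fun haD.eq y₀).symm
    have hDb : D (b z) = b (D z) := (DFunLike.congr_fun hbD.eq z).symm
    refine ⟨a y₀ + b z, ?_, ?_⟩
    · rw [map_add, hTa, hTb, hTz]
      exact DFunLike.congr_fun hab y₀
    · rw [map_add, hDa, hDb, ← hTz]
      exact (DFunLike.congr_fun hab z).symm
  refine ⟨fun y hy => (key ⟨y, hy⟩).imp fun w hw => hw.1, fun y x hyx => ?_⟩
  obtain ⟨w, hw, hval⟩ := key y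
  rw [hval, fracPMap_apply x (hw.trans hyx)]

theorem isSelfAdjoint_fracPMap {a b : E →L[ℂ] E} (hTs : IsSelfAdjoint T)
    (hDs : IsSelfAdjoint D) (hTD : Commute T D) (haT : Commute a T) (haD : Commute a D)
    (hbT : Commute b T) (hbD : Commute b D) (hab : a * T + b * D = 1) :
    IsSelfAdjoint (fracPMap T D hT) :=
  LinearPMap.isSelfAdjoint_def.mpr <| le_antisymm
    (fracPMap_adjoint_le hTs hDs haT haD hbT hbD hab)
    ((fracPMap_isFormalAdjoint hTs hDs hTD).le_adjoint (hTs.dense_range hT))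

end fracPMap

theorem exists_sqrt_and_sqrt_one_sub {A : Type*} [CStarAlgebra A] [PartialOrder A] [StarOrderedRing A]
    {c : A} (hc₀ : 0 ≤ c) (hc₁ : c ≤ 1) :
    ∃ s d : A, IsSelfAdjoint s ∧ IsSelfAdjoint d ∧ Commute s d ∧ s * s = c ∧ d * d = 1 - c ∧
      0 ≤ s * d := by
  have hspec₀ : ∀ t ∈ spectrum ℝ c, 0 ≤ t := fun t ht => spectrum_nonneg_of_nonneg hc₀ ht
  have hspec₁ : ∀ t ∈ spectrum ℝ c, t ≤ 1 :=
    (le_algebraMap_iff_spectrum_le (a := c)).mp (by simpa using hc₁)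
  refine ⟨cfc Real.sqrt c, cfc (fun t => Real.sqrt (1 - t)) c, .cfc, .cfc,
    cfc_commute_cfc _ _ c, ?_, ?_, ?_⟩
  · rw [← cfc_mul .., cfc_congr fun t ht => Real.mul_self_sqrt (hspec₀ t ht), cfc_id' ℝ c]
  · rw [← cfc_mul .., cfc_congr fun t ht => Real.mul_self_sqrt (sub_nonneg.mpr (hspec₁ t ht)),
      cfc_sub .., cfc_const_one ℝ c, cfc_id' ℝ c]
  · rw [← cfc_mul ..]
    exact cfc_nonneg fun t _ => mul_nonneg (Real.sqrt_nonneg _) (Real.sqrt_nonneg _)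

section FormGraph

variable {E K : Type*} [NormedAddCommGroup E] [InnerProductSpace ℂ E] [NormedAddCommGroup K]
  [InnerProductSpace ℂ K] (S : E →ₗ.[ℂ] E) (Λ : S.domain →ₗ[ℂ] K)

/-- `a ↦ (a, Λ a)`; when `⟪S a, b⟫ = ⟪Λ a, Λ b⟫`, the norm of `E ⊕₂ K` restricts to the form
norm of `S`. -/
def formGraphMap : S.domain →ₗ[ℂ] WithLp 2 (E × K) :=
  (WithLp.linearEquiv 2 ℂ (E × K)).symm.toLinearMap ∘ₗ S.domain.subtype.prod Λ

def formGraph : Submodule ℂ (WithLp 2 (E × K)) :=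
  (LinearMap.range (formGraphMap S Λ)).topologicalClosure

theorem formGraphMap_mem (a : S.domain) : formGraphMap S Λ a ∈ formGraph S Λ :=
  Submodule.le_topologicalClosure _ (LinearMap.mem_range_self _ a)

def formGraphFst : formGraph S Λ →L[ℂ] E :=
  WithLp.fstL 2 ℂ E K ∘L (formGraph S Λ).subtypeL

theorem formGraphFst_formGraphMap (a : S.domain) :
    formGraphFst S Λ ⟨_, formGraphMap_mem S Λ a⟩ = a := rfl

variable [CompleteSpace E] [CompleteSpace K]

instance : CompleteSpace (formGraph S Λ) :=
  (Submodule.isClosed_topologicalClosure _).completeSpace_coe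

/-- `(1 + S_F)⁻¹`, where `S_F` is the extension of `S` defined by its closed form. -/
def formResolvent : E →L[ℂ] E :=
  formGraphFst S Λ ∘L (formGraphFst S Λ).adjoint

theorem formResolvent_nonneg : 0 ≤ formResolvent S Λ :=
  (ContinuousLinearMap.nonneg_iff_isPositive _).mpr
    (ContinuousLinearMap.isPositive_self_comp_adjoint _)

theorem formResolvent_le_one : formResolvent S Λ ≤ 1 := by
  have hJ : ‖formGraphFst S Λ‖ ≤ 1 :=
    ContinuousLinearMap.opNorm_le_bound _ zero_le_one fun g => by
      rw [one_mul]
      exact WithLp.norm_fst_le (x := (g : WithLp 2 (E × K)))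
  refine (CStarAlgebra.norm_le_one_iff_of_nonneg _ (formResolvent_nonneg S Λ)).mp ?_
  calc ‖formResolvent S Λ‖ ≤ ‖formGraphFst S Λ‖ * ‖(formGraphFst S Λ).adjoint‖ :=
        ContinuousLinearMap.opNorm_comp_le _ _
    _ ≤ 1 := by
        rw [LinearIsometryEquiv.norm_map]
        nlinarith [norm_nonneg (formGraphFst S Λ)]

theorem formResolvent_injective (hdense : Dense (S.domain : Set E)) :
    Function.Injective (formResolvent S Λ) := by
  refine (injective_iff_map_eq_zero _).mpr fun z hz => ?_
  have hz' : z ∈ (formGraphFst S Λ : formGraph S Λ →ₗ[ℂ] E).rangeᗮ := by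
    rw [ContinuousLinearMap.orthogonal_range, ← ContinuousLinearMap.ker_self_comp_adjoint]
    exact hz
  exact hdense.eq_zero_of_inner_left (h := fun a ha =>
    Submodule.inner_left_of_mem_orthogonal
      (LinearMap.mem_range.mpr ⟨_, formGraphFst_formGraphMap S Λ ⟨a, ha⟩⟩) hz')

theorem formResolvent_apply_add (hΛ : ∀ x y : S.domain, ⟪S x, (y : E)⟫ = ⟪Λ x, Λ y⟫)
    (x : S.domain) : formResolvent S Λ (x + S x) = x := by
  have hclosure : ∀ w ∈ formGraph S Λ, ⟪(x : E) + S x, w.fst⟫ = ⟪formGraphMap S Λ x, w⟫ := by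
    intro w hw
    rw [← SetLike.mem_coe, formGraph, Submodule.topologicalClosure_coe] at hw
    refine Set.EqOn.closure ?_ (continuous_const.inner (WithLp.continuous_fst 2 E K))
      (continuous_const.inner continuous_id) hw
    rintro _ ⟨a, rfl⟩
    dsimp only [id]
    rw [WithLp.prod_inner_apply, inner_add_left]
    change ⟪(x : E), a⟫ + ⟪S x, (a : E)⟫ = ⟪(x : E), a⟫ + ⟪Λ x, Λ a⟫
    rw [hΛ]
  have hadj : (formGraphFst S Λ).adjoint (x + S x) = ⟨_, formGraphMap_mem S Λ x⟩ :=
    ext_inner_right ℂ fun g => by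
      rw [ContinuousLinearMap.adjoint_inner_left, Submodule.coe_inner, ← hclosure g g.2]
      rfl
  show formGraphFst S Λ ((formGraphFst S Λ).adjoint _) = _
  rw [hadj]
  rfl

/-- A fixed point `f` of the resolvent has `(f, 0)` in the closed form graph. -/
theorem exists_tendsto_of_formResolvent_apply_eq {f : E} (hf : formResolvent S Λ f = f) :
    ∃ a : ℕ → S.domain, Tendsto (fun n => (a n : E)) atTop (𝓝 f) ∧
      Tendsto (fun n => Λ (a n)) atTop (𝓝 0) := by
  set g := (formGraphFst S Λ).adjoint f
  have hfst : (g : WithLp 2 (E × K)).fst = f := hf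
  have hnorm : ‖g‖ ^ 2 = ‖f‖ ^ 2 := by
    have h : ⟪g, g⟫ = ⟪f, f⟫ := by
      rw [ContinuousLinearMap.adjoint_inner_left]
      exact congrArg _ hf
    rw [norm_sq_eq_re_inner (𝕜 := ℂ), norm_sq_eq_re_inner (𝕜 := ℂ), h]
  have hsnd : (g : WithLp 2 (E × K)).snd = 0 := by
    have h := WithLp.prod_norm_sq_eq_of_L2 (g : WithLp 2 (E × K))
    rw [hfst, show ‖(g : WithLp 2 (E × K))‖ = ‖g‖ from rfl, hnorm] at h
    simpa using h
  have hmem : WithLp.toLp 2 (f, (0 : K)) ∈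
      closure (LinearMap.range (formGraphMap S Λ) : Set (WithLp 2 (E × K))) := by
    have hg : (g : WithLp 2 (E × K)) = WithLp.toLp 2 (f, 0) :=
      WithLp.ofLp_injective 2 (Prod.ext hfst hsnd)
    rw [← Submodule.topologicalClosure_coe, ← hg]
    exact g.2
  obtain ⟨w, hw, hlim⟩ := mem_closure_iff_seq_limit.mp hmem
  choose a ha using hw
  obtain rfl : w = fun n => formGraphMap S Λ (a n) := funext fun n => (ha n).symm
  exact ⟨a, ((WithLp.continuous_fst 2 E K).tendsto _).comp hlim,
    ((WithLp.continuous_snd 2 E K).tendsto _).comp hlim⟩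

end FormGraph

theorem exists_selfAdjoint_extension_of_inner_eq {K : Type*} [NormedAddCommGroup K]
    [InnerProductSpace ℂ K] [CompleteSpace K] (S : H →ₗ.[ℂ] H) (hdense : Dense (S.domain : Set H))
    (Λ : S.domain →ₗ[ℂ] K) (hΛ : ∀ x y : S.domain, ⟪S x, (y : H)⟫ = ⟪Λ x, Λ y⟫) :
    ∃ B sB : H →ₗ.[ℂ] H, IsSelfAdjoint B ∧ B.IsNonneg ∧ S ≤ B ∧
      IsSelfAdjoint sB ∧ sB.IsNonneg ∧ IsSqrtOf sB B ∧
      ∀ f : sB.domain, sB f = 0 → ∃ a : ℕ → S.domain,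
        Tendsto (fun n => (a n : H)) atTop (𝓝 f) ∧
        Tendsto (fun n => (⟪S (a n), (a n : H)⟫).re) atTop (𝓝 0) := by
  obtain ⟨s, d, hs, hd, hsd, hss, hdd, hsd₀⟩ :=
    exists_sqrt_and_sqrt_one_sub (formResolvent_nonneg S Λ) (formResolvent_le_one S Λ)
  have hsum : s * s + d * d = 1 := by rw [hss, hdd, add_sub_cancel]
  have hsinj : Function.Injective s := fun u v huv =>
    formResolvent_injective S Λ hdense <| by rw [← hss]; exact congrArg s huv
  have hss' : IsSelfAdjoint (s * s) := (hs.commute_iff hs).mp (Commute.refl s)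
  have hdd' : IsSelfAdjoint (d * d) := (hd.commute_iff hd).mp (Commute.refl d)
  have hssdd : Commute (s * s) (d * d) := (hsd.mul_left hsd).mul_right (hsd.mul_left hsd)
  refine ⟨fracPMap (s * s) (d * d) (hsinj.comp hsinj), fracPMap s d hsinj,
    isSelfAdjoint_fracPMap (a := 1) (b := 1) hss' hdd' hssdd (.one_left _) (.one_left _)
      (.one_left _) (.one_left _) (by rw [one_mul, one_mul, hsum]),
    isNonneg_fracPMap hss'
      (hsd.mul_mul_mul_comm s d ▸ (IsSelfAdjoint.of_nonneg hsd₀).mul_self_nonneg),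
    le_fracPMap hsum (hss ▸ formResolvent_apply_add S Λ hΛ),
    isSelfAdjoint_fracPMap hs hd hsd (.refl s) hsd hsd.symm (.refl d) hsum,
    isNonneg_fracPMap hs hsd₀, isSqrtOf_fracPMap hsd hsum, fun f hf => ?_⟩
  have hfix : formResolvent S Λ f = f := hss ▸ mul_self_apply_eq_of_fracPMap_eq_zero hsum f hf
  obtain ⟨a, haf, hΛa⟩ := exists_tendsto_of_formResolvent_apply_eq S Λ hfix
  refine ⟨a, haf, ?_⟩
  have hform : ∀ n, (⟪S (a n), (a n : H)⟫).re = ‖Λ (a n)‖ ^ 2 := fun n => by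
    rw [hΛ]
    simpa using inner_self_eq_norm_sq (𝕜 := ℂ) (Λ (a n))
  simpa [hform] using hΛa.norm.pow 2

theorem linearIndependent_of_biorthogonal {𝕜 E ι : Type*} [RCLike 𝕜] [NormedAddCommGroup E]
    [InnerProductSpace 𝕜 E] [DecidableEq ι] {φ ψ : ι → E}
    (hbi : ∀ n m, inner 𝕜 (ψ n) (φ m) = if n = m then (1 : 𝕜) else 0) :
    LinearIndependent 𝕜 φ := by
  refine LinearIndependent.of_comp (LinearMap.pi fun n => innerₛₗ 𝕜 (ψ n)) ?_
  convert Pi.linearIndependent_single_one ι 𝕜 using 1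
  · ext m n
    simp [hbi, Pi.single_apply]
  · rfl

/-- Sending `φ n` to an orthonormal sequence turns `⟪S φ n, φ m⟫ = δ n m` into a Gram form. -/
theorem exists_linearMap_inner_eq_of_biorthogonal {E : Type*} [NormedAddCommGroup E]
    [InnerProductSpace ℂ E] {φ ψ : ℕ → E}
    (hbi : ∀ n m, ⟪ψ n, φ m⟫ = if n = m then (1 : ℂ) else 0) {S : E →ₗ.[ℂ] E}
    (hdom : S.domain = Submodule.span ℂ (Set.range φ))
    (hS : ∀ n, ∃ h : φ n ∈ S.domain, S ⟨φ n, h⟩ = ψ n) :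
    ∃ Λ : S.domain →ₗ[ℂ] E, ∀ x y : S.domain, ⟪S x, (y : E)⟫ = ⟪Λ x, Λ y⟫ := by
  have hli := linearIndependent_of_biorthogonal hbi
  let b : Module.Basis ℕ ℂ S.domain :=
    (Module.Basis.span hli).map (LinearEquiv.ofEq _ _ hdom).symm
  have hb : ∀ n, b n = ⟨φ n, (hS n).1⟩ := fun n => by
    ext
    simp [b, Module.Basis.span_apply]
  set Λ := b.constr ℂ (InnerProductSpace.gramSchmidtNormed ℂ φ)
  have he := orthonormal_iff_ite.mp (InnerProductSpace.gramSchmidtNormed_orthonormal hli)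
  have hforms : ((innerₛₗ ℂ).comp S.toFun).compl₂ S.domain.subtype =
      ((innerₛₗ ℂ).comp Λ).compl₂ Λ := LinearMap.ext_basis b b fun n m => by
    obtain ⟨_, hSn⟩ := hS n
    simp only [LinearMap.compl₂_apply, LinearMap.comp_apply, innerₛₗ_apply_apply, Λ,
      Module.Basis.constr_basis]
    rw [he, ← hbi, hb, hb]
    exact congrArg (fun z => ⟪z, φ m⟫) hSn
  exact ⟨Λ, LinearMap.congr_fun₂ hforms⟩

theorem friedrichs_positive_iff_closure_general
    (φ ψ : ℕ → H)
    (hbi : ∀ n m, ⟪ψ n, φ m⟫ = if n = m then (1 : ℂ) else 0)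
    (hcomp : Dense ((Submodule.span ℂ (Set.range φ) : Submodule ℂ H) : Set H))
    (S : H →ₗ.[ℂ] H)
    (hdom : S.domain = Submodule.span ℂ (Set.range φ))
    (hS : ∀ n, ∃ h : φ n ∈ S.domain, S ⟨φ n, h⟩ = ψ n)
    (AF sAF : H →ₗ.[ℂ] H) (hAF : IsFriedrichsExtOf AF sAF S) :
    AF.IsPositive ↔
      (S.closure.IsPositive ∧
        ∀ (f : ℕ → S.closure.domain) (g : H),
          Tendsto (fun n => (⟪S.closure (f n), ((f n) : H)⟫).re) atTop (𝓝 0) →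
          Tendsto (fun n => ((f n) : H)) atTop (𝓝 g) → g = 0) := by
  obtain ⟨hAFsa, hAFnn, hSAF, hsAFsa, -, hsAFsq, hmax⟩ := hAF
  have hclAF : S.closure ≤ AF := hAFsa.isClosed.closure_le hSAF
  constructor
  · intro hpos
    refine ⟨hpos.of_le hclAF, fun f g hform hfg => ?_⟩
    refine hsAFsq.eq_zero_of_tendsto hsAFsa hpos (f := fun n => ⟨f n, hclAF.1 (f n).2⟩) ?_ hfg
    exact hform.congr fun n => by rw [LinearPMap.apply_eq_of_le hclAF]
  · rintro ⟨-, hlim⟩ f hf0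
    refine (hAFnn f).lt_of_ne fun hzero => hf0 ?_
    obtain ⟨Λ, hΛ⟩ := exists_linearMap_inner_eq_of_biorthogonal hbi hdom hS
    obtain ⟨B, sB, hBsa, hBnn, hSB, hsBsa, hsBnn, hsBsq, happrox⟩ :=
      exists_selfAdjoint_extension_of_inner_eq S (hdom ▸ hcomp) Λ hΛ
    have hsAFf := hsAFsq.apply_eq_zero_of_re_inner_eq_zero hsAFsa hzero.symm
    have hsBf := (hmax B sB hBsa hBnn hSB hsBsa hsBnn hsBsq).apply_eq_zero hsAFf
    obtain ⟨a, haf, hform⟩ := happrox _ hsBf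
    exact hlim (fun n => ⟨a n, S.le_closure.1 (a n).2⟩) f
      (hform.congr fun n => by rw [LinearPMap.apply_eq_of_le S.le_closure]) haf

/-- The Friedrichs extension `A_F` of the operator `S` associated with a semi-regular sequence
`{φ_n}` is positive if and only if the closure `S̄` of `S` is positive and the conditions
`⟨S̄ f_n, f_n⟩ → 0` and `f_n → g` imply `g = 0`. -/
theorem friedrichs_positive_iff_closure
    (φ ψ : ℕ → H)
    (hbi : ∀ n m, ⟪ψ n, φ m⟫ = if n = m then (1 : ℂ) else 0)
    (hcomp : Dense ((Submodule.span ℂ (Set.range φ) : Submodule ℂ H) : Set H))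
    (S : H →ₗ.[ℂ] H)
    (hdom : S.domain = Submodule.span ℂ (Set.range φ))
    (hS : ∀ n, ∃ h : φ n ∈ S.domain, S ⟨φ n, h⟩ = ψ n)
    (hclos : S.IsClosable)
    (AF sAF : H →ₗ.[ℂ] H) (hAF : IsFriedrichsExtOf AF sAF S) :
    AF.IsPositive ↔
      (S.closure.IsPositive ∧
        ∀ (f : ℕ → S.closure.domain) (g : H),
          Tendsto (fun n => (⟪S.closure (f n), ((f n) : H)⟫).re) atTop (𝓝 0) →
          Tendsto (fun n => ((f n) : H)) atTop (𝓝 g) → g = 0) :=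
  friedrichs_positive_iff_closure_general φ ψ hbi hcomp S hdom hS AF sAF hAF
end
end

section
/- Every regular sequence in a Hilbert space is a generalized Riesz system. That is, if {φ_n} is minimal and complete and its biorthogonal sequence {ψ_n} is also complete, then there exists a self-adjoint operator Q and an orthonormal basis {e_n} with e_n ∈ D(e^{Q/2}) ∩ D(e^{-Q/2}) and φ_n = e^{Q/2}e_n. -/
open scoped ComplexInnerProductSpace
open Filter Topology

noncomputable section

variable {H : Type*} [NormedAddCommGroup H] [InnerProductSpace ℂ H] [CompleteSpace H]

/-!
Orthonormalize `φ` into `u` and let `W ⊆ H ⊕ H` be the closed span of the pairs `(φ n, u n)`.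
Biorthogonality gives `⟪u n, q⟫ = ⟪ψ n, p⟫` for `(p, q) ∈ W`, so `W` is the graph of the
closure `T` of `φ n ↦ u n`. With `P : W → H` the first projection, `C = P P* = (1 + T* T)⁻¹`
satisfies `0 ≤ C ≤ 1` and `C (φ n + ψ n) = φ n`; completeness of `φ` makes `C` injective and
completeness of `ψ` makes `1 - C` injective. Then `E = √C (√(1 - C))⁻¹ = |T|⁻¹` and
`F = √(1 - C) (√C)⁻¹` are mutually inverse positive self-adjoint operators, and
`e n = √(1 - C) √C (φ n + ψ n)` satisfies `E e n = φ n`. The `e n` are orthonormal by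
biorthogonality, and complete because `span φ` is a core of `T`, which comes down to the range
inclusion `range √(P P*) ⊆ range P`.
-/

section InnerProductSpace

variable {𝕜 E ι : Type*} [RCLike 𝕜] [NormedAddCommGroup E] [InnerProductSpace 𝕜 E]
  {v : ι → E}

theorem Submodule.mem_orthogonal_span_range {x : E} :
    x ∈ (span 𝕜 (Set.range v))ᗮ ↔ ∀ i, inner 𝕜 (v i) x = 0 := by
  refine ⟨fun h i => (mem_orthogonal _ x).1 h _ (subset_span ⟨i, rfl⟩), fun h => ?_⟩
  rw [mem_orthogonal]
  intro w hw
  induction hw using span_induction with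
  | mem _ hw => obtain ⟨i, rfl⟩ := hw; exact h i
  | zero => exact inner_zero_left x
  | add a b _ _ ha hb => rw [inner_add_left, ha, hb, add_zero]
  | smul c a _ ha => rw [inner_smul_left, ha, mul_zero]

theorem Submodule.eq_zero_of_mem_closure_span_range {x : E}
    (hx : x ∈ (span 𝕜 (Set.range v)).topologicalClosure) (h : ∀ i, inner 𝕜 (v i) x = 0) :
    x = 0 := by
  have hx' : x ∈ (span 𝕜 (Set.range v)).topologicalClosureᗮ := by
    rw [orthogonal_closure]
    exact mem_orthogonal_span_range.2 h
  simpa using (mem_orthogonal _ x).1 hx' x hx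

theorem dense_span_range_iff [CompleteSpace E] :
    Dense (Submodule.span 𝕜 (Set.range v) : Set E) ↔
      ∀ x, (∀ i, inner 𝕜 (v i) x = 0) → x = 0 := by
  rw [Submodule.dense_iff_topologicalClosure_eq_top, Submodule.topologicalClosure_eq_top_iff,
    Submodule.eq_bot_iff]
  simp only [Submodule.mem_orthogonal_span_range]

theorem linearIndependent_of_inner_eq_ite [DecidableEq ι] {w : ι → E}
    (h : ∀ i j, inner 𝕜 (w i) (v j) = if i = j then 1 else 0) : LinearIndependent 𝕜 v := by
  rw [linearIndependent_iff']
  intro s g hsum i hi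
  simpa [inner_sum, inner_smul_right, h, hi] using congrArg (inner 𝕜 (w i)) hsum

end InnerProductSpace

namespace LinearMap

variable {R E F G : Type*} [Ring R] [AddCommGroup E] [Module R E] [AddCommGroup F] [Module R F]
  [AddCommGroup G] [Module R G]

def compInv (Y : E →ₗ[R] F) (X : E →ₗ[R] G) (hX : Function.Injective X) : G →ₗ.[R] F :=
  ⟨range X, Y ∘ₗ (LinearEquiv.ofInjective X hX).symm.toLinearMap⟩

variable {Y : E →ₗ[R] F} {X : E →ₗ[R] G} {hX : Function.Injective X}

@[simp]
theorem compInv_domain : (Y.compInv X hX).domain = range X := rfl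

theorem compInv_apply_of_eq {p : (Y.compInv X hX).domain} {x : E} (h : X x = p) :
    Y.compInv X hX p = Y x :=
  congrArg Y ((LinearEquiv.ofInjective X hX).symm_apply_eq.2 (Subtype.ext h.symm))

theorem compInv_compInv {hY : Function.Injective Y} (p : (Y.compInv X hX).domain) :
    ∃ h : Y.compInv X hX p ∈ (X.compInv Y hY).domain, X.compInv Y hY ⟨_, h⟩ = p := by
  obtain ⟨x, hx⟩ := p.2
  have hp : Y.compInv X hX p = Y x := compInv_apply_of_eq hx
  exact ⟨hp ▸ mem_range_self Y x, (compInv_apply_of_eq hp.symm).trans hx⟩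

end LinearMap

theorem Commute.cfcSqrt_cfcSqrt {A : Type*} [NonUnitalCStarAlgebra A] [PartialOrder A]
    [StarOrderedRing A] {a b : A} (h : Commute a b) : Commute (CFC.sqrt a) (CFC.sqrt b) :=
  ((h.cfcₙ_nnreal NNReal.sqrt).symm.cfcₙ_nnreal NNReal.sqrt).symm

theorem CFC.injective_sqrt {T : H →L[ℂ] H} (hT : 0 ≤ T) (hinj : Function.Injective T) :
    Function.Injective ⇑(CFC.sqrt T) :=
  .of_comp (f := ⇑(CFC.sqrt T)) (show Function.Injective ⇑(CFC.sqrt T * CFC.sqrt T) by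
    rwa [CFC.sqrt_mul_sqrt_self T])

namespace ContinuousLinearMap

theorem denseRange_of_isSelfAdjoint {T : H →L[ℂ] H} (hT : IsSelfAdjoint T)
    (hinj : Function.Injective T) : DenseRange T := by
  have : (LinearMap.range (T : H →ₗ[ℂ] H))ᗮ = ⊥ := by
    rw [hT.isSymmetric.orthogonal_range, LinearMap.ker_eq_bot]
    exact hinj
  rw [← Submodule.topologicalClosure_eq_top_iff,
    ← Submodule.dense_iff_topologicalClosure_eq_top, LinearMap.coe_range] at this
  exact this

theorem re_inner_pos_of_nonneg {T : H →L[ℂ] H} (hT : 0 ≤ T) (hinj : Function.Injective T)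
    {x : H} (hx : x ≠ 0) : 0 < (⟪T x, x⟫).re := by
  set S := CFC.sqrt T
  have hTS : T x = S (S x) := congr($(CFC.sqrt_mul_sqrt_self T) x).symm
  have hSx : S x ≠ 0 := fun h => hx (hinj (by rw [hTS, h, map_zero, map_zero]))
  rw [hTS, (CFC.sqrt_nonneg T).isSelfAdjoint.isSymmetric.apply_clm, ← RCLike.re_to_complex,
    inner_self_eq_norm_sq]
  positivity

section Adjoint

variable {K : Type*} [NormedAddCommGroup K] [InnerProductSpace ℂ K] [CompleteSpace K]
  {P : K →L[ℂ] H}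

theorem self_comp_adjoint_nonneg (P : K →L[ℂ] H) : 0 ≤ P ∘L P.adjoint :=
  (nonneg_iff_isPositive _).2 P.isPositive_self_comp_adjoint

theorem injective_self_comp_adjoint_of_denseRange (hP : DenseRange P) :
    Function.Injective (P ∘L P.adjoint) := by
  refine P.self_comp_adjoint_injective_iff.2 ((injective_iff_map_eq_zero _).2 fun x hx => ?_)
  exact hP.eq_zero_of_inner_left ℂ fun p => by rw [← adjoint_inner_left, hx, inner_zero_left]

theorem self_comp_adjoint_le_one (hP : ‖P‖ ≤ 1) : P ∘L P.adjoint ≤ 1 := by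
  rw [← CStarAlgebra.norm_le_one_iff_of_nonneg _ P.self_comp_adjoint_nonneg]
  calc ‖P ∘L P.adjoint‖ ≤ ‖P‖ * ‖P.adjoint‖ := opNorm_comp_le _ _
    _ = ‖P‖ * ‖P‖ := by rw [LinearIsometryEquiv.norm_map]
    _ ≤ 1 := mul_le_one₀ hP (norm_nonneg P) hP

theorem range_sqrt_self_comp_adjoint_subset (hP : DenseRange P) :
    Set.range ⇑(CFC.sqrt (P ∘L P.adjoint)) ⊆ Set.range P := by
  set G := CFC.sqrt (P ∘L P.adjoint)
  have hG : G * G = P ∘L P.adjoint := CFC.sqrt_mul_sqrt_self _ P.self_comp_adjoint_nonneg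
  have hGsa : IsSelfAdjoint G := (CFC.sqrt_nonneg _).isSelfAdjoint
  have hnorm (x : H) : ‖P.adjoint x‖ = ‖G x‖ := by
    have h1 := P.adjoint.apply_norm_sq_eq_inner_adjoint_left x
    have h2 := G.apply_norm_sq_eq_inner_adjoint_left x
    rw [adjoint_adjoint] at h1
    rw [hGsa.adjoint_eq, ← mul_def, hG, ← h1] at h2
    exact (pow_left_inj₀ (norm_nonneg _) (norm_nonneg _) two_ne_zero).1 h2.symm
  have hGdense : DenseRange G := denseRange_of_isSelfAdjoint hGsa
    (CFC.injective_sqrt P.self_comp_adjoint_nonneg (injective_self_comp_adjoint_of_denseRange hP))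
  set V := (P.adjoint : H →ₗ[ℂ] K).extendOfNorm (G : H →ₗ[ℂ] H)
  have hV (x : H) : V (G x) = P.adjoint x :=
    LinearMap.extendOfNorm_eq hGdense ⟨1, fun x => by simp [hnorm]⟩ x
  -- `V` extends the isometry `G x ↦ P* x`; then `P V G = P P* = G G`, so `P V = G`.
  have hPV : P ∘L V = G := by
    refine DFunLike.coe_injective (hGdense.equalizer (P ∘L V).continuous G.continuous ?_)
    ext x
    simp only [Function.comp_apply, coe_comp, hV]
    exact congr($hG x).symm
  rintro _ ⟨y, rfl⟩
  exact ⟨V y, congr($hPV y)⟩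

end Adjoint

variable {X Y : H →L[ℂ] H}

theorem isSelfAdjoint_compInv (hX : IsSelfAdjoint X) (hY : IsSelfAdjoint Y) (hXY : Commute X Y)
    (hsum : X * X + Y * Y = 1) (hinj : Function.Injective X) :
    IsSelfAdjoint ((Y : H →ₗ[ℂ] H).compInv (X : H →ₗ[ℂ] H) hinj) := by
  set P := (Y : H →ₗ[ℂ] H).compInv (X : H →ₗ[ℂ] H) hinj
  have hdense : Dense (P.domain : Set H) := by
    rw [LinearMap.compInv_domain, LinearMap.coe_range]
    exact denseRange_of_isSelfAdjoint hX hinj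
  have hXY' (z : H) : X (Y z) = Y (X z) := congr($hXY z)
  have hsymm : P.IsFormalAdjoint P := by
    rintro ⟨_, x, rfl⟩ ⟨_, y, rfl⟩
    rw [LinearMap.compInv_apply_of_eq rfl, LinearMap.compInv_apply_of_eq rfl]
    calc ⟪Y x, X y⟫ = ⟪X (Y x), y⟫ := (hX.isSymmetric.apply_clm _ _).symm
      _ = ⟪X x, Y y⟫ := by rw [hXY', hY.isSymmetric.apply_clm]
  -- A pair `(u, g)` in the graph of `P*` has `X g = Y u`, and then `x = X u + Y g` has
  -- `(X x, Y x) = (u, g)`.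
  have hdom : P.adjoint.domain ≤ P.domain := by
    intro u hu
    set g := P.adjoint ⟨u, hu⟩
    have hXg : X g = Y u := ext_inner_right ℂ fun z => by
      have h := LinearPMap.adjoint_isFormalAdjoint hdense ⟨u, hu⟩
        ⟨X z, LinearMap.mem_range_self _ z⟩
      rw [LinearMap.compInv_apply_of_eq rfl] at h
      rw [hX.isSymmetric.apply_clm, hY.isSymmetric.apply_clm]
      exact h
    refine ⟨X u + Y g, ?_⟩
    calc X (X u + Y g) = (X * X + Y * Y) u := by rw [map_add, hXY', hXg]; rfl
      _ = u := by rw [hsum]; rfl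
  have hle := hsymm.le_adjoint hdense
  exact LinearPMap.isSelfAdjoint_def.2
    (LinearPMap.eq_of_le_of_domain_eq hle (le_antisymm hle.1 hdom)).symm

theorem isPositive_compInv (hX : IsSelfAdjoint X) (hXY : 0 ≤ X * Y)
    (hXY_inj : Function.Injective (X * Y)) (hinj : Function.Injective X) :
    ((Y : H →ₗ[ℂ] H).compInv (X : H →ₗ[ℂ] H) hinj).IsPositive := by
  rintro ⟨_, x, rfl⟩ hx
  rw [LinearMap.compInv_apply_of_eq rfl]
  change 0 < (⟪Y x, X x⟫).re
  rw [← hX.isSymmetric.apply_clm]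
  exact re_inner_pos_of_nonneg hXY hXY_inj fun h => hx (by simp [h])

end ContinuousLinearMap

theorem orthonormal_sqrt_one_sub_sqrt {C : H →L[ℂ] H} (hC₀ : 0 ≤ C) (hC₁ : C ≤ 1)
    {φ ψ : ℕ → H} (hbi : ∀ n m, ⟪ψ n, φ m⟫ = if n = m then (1 : ℂ) else 0)
    (hφ : ∀ n, C (φ n + ψ n) = φ n) :
    Orthonormal ℂ fun n => CFC.sqrt (1 - C) (CFC.sqrt C (φ n + ψ n)) := by
  set G := CFC.sqrt C
  set R := CFC.sqrt (1 - C)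
  have hG : G * G = C := CFC.sqrt_mul_sqrt_self C hC₀
  have hR : R * R = 1 - C := CFC.sqrt_mul_sqrt_self (1 - C) (sub_nonneg.2 hC₁)
  have hGR : Commute G R := ((Commute.one_right C).sub_right (Commute.refl C)).cfcSqrt_cfcSqrt
  have hRRG : Commute (R * R) G := hGR.symm.mul_left hGR.symm
  have key (a b : H) : ⟪R (G a), R (G b)⟫ = ⟪C a, (1 - C) b⟫ := by
    calc ⟪R (G a), R (G b)⟫ = ⟪G a, (R * R * G) b⟫ :=
          (CFC.sqrt_nonneg (1 - C)).isSelfAdjoint.isSymmetric.apply_clm _ _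
      _ = ⟪G a, G ((R * R) b)⟫ := by rw [hRRG.eq]; rfl
      _ = ⟪(G * G) a, (R * R) b⟫ :=
          ((CFC.sqrt_nonneg C).isSelfAdjoint.isSymmetric.apply_clm _ _).symm
      _ = ⟪C a, (1 - C) b⟫ := by rw [hG, hR]
  rw [orthonormal_iff_ite]
  intro n m
  rw [key, hφ, sub_apply, one_apply_eq_self, hφ, add_sub_cancel_left, ← inner_conj_symm, hbi]
  simp [eq_comm]

theorem isONB_sqrt_one_sub_sqrt {C : H →L[ℂ] H} (hC₀ : 0 ≤ C) (hC₁ : C ≤ 1)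
    (hC : Function.Injective C) (hC' : Function.Injective ⇑(1 - C)) {φ ψ : ℕ → H}
    (hbi : ∀ n m, ⟪ψ n, φ m⟫ = if n = m then (1 : ℂ) else 0)
    (hφ : ∀ n, C (φ n + ψ n) = φ n)
    (hcore : ∀ y, (∀ n, ⟪φ n + ψ n, CFC.sqrt C y⟫ = 0) → CFC.sqrt C y = 0) :
    IsONB fun n => CFC.sqrt (1 - C) (CFC.sqrt C (φ n + ψ n)) := by
  refine ⟨orthonormal_sqrt_one_sub_sqrt hC₀ hC₁ hbi hφ,
    dense_span_range_iff.2 fun z hz => ?_⟩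
  have hz' : ∀ n, ⟪φ n + ψ n, CFC.sqrt C (CFC.sqrt (1 - C) z)⟫ = 0 := fun n => by
    rw [← (CFC.sqrt_nonneg C).isSelfAdjoint.isSymmetric.apply_clm,
      ← (CFC.sqrt_nonneg (1 - C)).isSelfAdjoint.isSymmetric.apply_clm]
    exact hz n
  have hRz : CFC.sqrt (1 - C) z = 0 := CFC.injective_sqrt hC₀ hC (by rw [hcore _ hz', map_zero])
  exact CFC.injective_sqrt (sub_nonneg.2 hC₁) hC' (by rw [hRz, map_zero])

theorem isGRS_of_sqrt {C : H →L[ℂ] H} (hC₀ : 0 ≤ C) (hC₁ : C ≤ 1)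
    (hC : Function.Injective C) (hC' : Function.Injective ⇑(1 - C)) {φ v : ℕ → H}
    (hφ : ∀ n, C (v n) = φ n)
    (he : IsONB fun n => CFC.sqrt (1 - C) (CFC.sqrt C (v n))) : IsGRS φ := by
  set G := CFC.sqrt C
  set R := CFC.sqrt (1 - C)
  have hG : G * G = C := CFC.sqrt_mul_sqrt_self C hC₀
  have hR : R * R = 1 - C := CFC.sqrt_mul_sqrt_self (1 - C) (sub_nonneg.2 hC₁)
  have hGR : Commute G R := ((Commute.one_right C).sub_right (Commute.refl C)).cfcSqrt_cfcSqrt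
  have hGsa : IsSelfAdjoint G := (CFC.sqrt_nonneg C).isSelfAdjoint
  have hRsa : IsSelfAdjoint R := (CFC.sqrt_nonneg (1 - C)).isSelfAdjoint
  have hGinj : Function.Injective G := CFC.injective_sqrt hC₀ hC
  have hRinj : Function.Injective R := CFC.injective_sqrt (sub_nonneg.2 hC₁) hC'
  have hsum : G * G + R * R = 1 := by rw [hG, hR, add_sub_cancel]
  refine ⟨(G : H →ₗ[ℂ] H).compInv (R : H →ₗ[ℂ] H) hRinj,
    (R : H →ₗ[ℂ] H).compInv (G : H →ₗ[ℂ] H) hGinj, _,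
    ContinuousLinearMap.isSelfAdjoint_compInv hRsa hGsa hGR.symm (by rwa [add_comm]) hRinj,
    ContinuousLinearMap.isSelfAdjoint_compInv hGsa hRsa hGR hsum hGinj,
    ContinuousLinearMap.isPositive_compInv hRsa
      (hGR.symm.mul_nonneg (CFC.sqrt_nonneg _) (CFC.sqrt_nonneg _)) (hRinj.comp hGinj) hRinj,
    ContinuousLinearMap.isPositive_compInv hGsa
      (hGR.mul_nonneg (CFC.sqrt_nonneg _) (CFC.sqrt_nonneg _)) (hGinj.comp hRinj) hGinj,
    LinearMap.compInv_compInv, LinearMap.compInv_compInv, he, fun n => ?_⟩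
  refine ⟨LinearMap.mem_range_self _ _, ⟨R (v n), congr($hGR (v n))⟩, ?_⟩
  rw [LinearMap.compInv_apply_of_eq (x := G (v n)) rfl]
  exact (congr($hG (v n)).trans (hφ n)).symm

section GraphClosure

variable {E : Type*} [NormedAddCommGroup E] [InnerProductSpace ℂ E] (φ u : ℕ → E)

def graphClosure : Submodule ℂ (WithLp 2 (E × E)) :=
  (Submodule.span ℂ (Set.range fun n => WithLp.toLp 2 (φ n, u n))).topologicalClosure

def graphFst : graphClosure φ u →L[ℂ] E :=
  (WithLp.fstL 2 ℂ E E).comp (graphClosure φ u).subtypeL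

instance [CompleteSpace E] : CompleteSpace (graphClosure φ u) :=
  Submodule.topologicalClosure.completeSpace _

variable {φ u} {ψ : ℕ → E}

@[simp]
theorem graphFst_apply (p : graphClosure φ u) :
    graphFst φ u p = (p : WithLp 2 (E × E)).fst :=
  rfl

theorem toLp_mem_graphClosure (n : ℕ) : WithLp.toLp 2 (φ n, u n) ∈ graphClosure φ u :=
  Submodule.le_topologicalClosure _ (Submodule.subset_span ⟨n, rfl⟩)

theorem inner_snd_eq_inner_fst_of_mem_graphClosure
    (hbi : ∀ n m, ⟪ψ n, φ m⟫ = if n = m then (1 : ℂ) else 0) (hu : Orthonormal ℂ u)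
    {p : WithLp 2 (E × E)} (hp : p ∈ graphClosure φ u) (n : ℕ) :
    ⟪u n, p.snd⟫ = ⟪ψ n, p.fst⟫ := by
  set f : WithLp 2 (E × E) →L[ℂ] ℂ :=
    (innerSL ℂ (u n)).comp (WithLp.sndL 2 ℂ E E) -
      (innerSL ℂ (ψ n)).comp (WithLp.fstL 2 ℂ E E)
  have hf : graphClosure φ u ≤ LinearMap.ker (f : WithLp 2 (E × E) →ₗ[ℂ] ℂ) := by
    refine Submodule.topologicalClosure_minimal _ ?_ f.isClosed_ker
    refine Submodule.span_le.2 (Set.range_subset_iff.2 fun m => ?_)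
    simp [f, hbi, orthonormal_iff_ite.1 hu]
  exact sub_eq_zero.1 (hf hp)

theorem norm_graphFst_le : ‖graphFst φ u‖ ≤ 1 :=
  ContinuousLinearMap.opNorm_le_bound _ zero_le_one fun p => by
    simpa using WithLp.norm_fst_le E (p : WithLp 2 (E × E))

theorem denseRange_graphFst
    (hcompφ : Dense ((Submodule.span ℂ (Set.range φ) : Submodule ℂ E) : Set E)) :
    DenseRange (graphFst φ u) := by
  have : Submodule.span ℂ (Set.range φ) ≤
      LinearMap.range (graphFst φ u : graphClosure φ u →ₗ[ℂ] E) :=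
    Submodule.span_le.2 (Set.range_subset_iff.2 fun n =>
      LinearMap.mem_range.2 ⟨⟨_, toLp_mem_graphClosure n⟩, rfl⟩)
  exact hcompφ.mono this

variable [CompleteSpace E]

theorem graphFst_adjoint_add
    (hbi : ∀ n m, ⟪ψ n, φ m⟫ = if n = m then (1 : ℂ) else 0) (hu : Orthonormal ℂ u)
    (n : ℕ) :
    (graphFst φ u).adjoint (φ n + ψ n) = ⟨_, toLp_mem_graphClosure n⟩ := by
  refine ext_inner_right ℂ fun p => ?_
  rw [ContinuousLinearMap.adjoint_inner_left, Submodule.coe_inner, WithLp.prod_inner_apply,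
    graphFst_apply, inner_add_left, ← inner_snd_eq_inner_fst_of_mem_graphClosure hbi hu p.2]
  rfl

theorem injective_one_sub_graphFst_comp_adjoint
    (hbi : ∀ n m, ⟪ψ n, φ m⟫ = if n = m then (1 : ℂ) else 0) (hu : Orthonormal ℂ u)
    (hcompψ : Dense ((Submodule.span ℂ (Set.range ψ) : Submodule ℂ E) : Set E)) :
    Function.Injective ⇑(1 - graphFst φ u ∘L (graphFst φ u).adjoint) := by
  set P := graphFst φ u
  rw [injective_iff_map_eq_zero]
  intro x hx
  set p := P.adjoint x
  have hfst : (p : WithLp 2 (E × E)).fst = x := (sub_eq_zero.1 hx).symm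
  -- `‖p‖² = ‖p.fst‖² + ‖p.snd‖²`, while `‖p‖² = ⟪P p, x⟫ = ‖x‖²`; hence `p.snd = 0`.
  have hnorm : ‖(p : WithLp 2 (E × E))‖ ^ 2 = ‖x‖ ^ 2 := by
    have h := P.adjoint.apply_norm_sq_eq_inner_adjoint_left x
    rw [ContinuousLinearMap.adjoint_adjoint, ContinuousLinearMap.comp_apply] at h
    calc ‖(p : WithLp 2 (E × E))‖ ^ 2 = RCLike.re ⟪P p, x⟫ := h
      _ = ‖x‖ ^ 2 := by rw [show P p = x from hfst, inner_self_eq_norm_sq]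
  have hsnd : (p : WithLp 2 (E × E)).snd = 0 := by
    have h := WithLp.prod_norm_sq_eq_of_L2 (p : WithLp 2 (E × E))
    rwa [hnorm, hfst, left_eq_add, sq_eq_zero_iff, norm_eq_zero] at h
  refine (dense_span_range_iff.1 hcompψ) x fun n => ?_
  rw [← hfst, ← inner_snd_eq_inner_fst_of_mem_graphClosure hbi hu p.2, hsnd, inner_zero_right]

theorem sqrt_graphFst_comp_adjoint_eq_zero
    (hbi : ∀ n m, ⟪ψ n, φ m⟫ = if n = m then (1 : ℂ) else 0) (hu : Orthonormal ℂ u)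
    (hcompφ : Dense ((Submodule.span ℂ (Set.range φ) : Submodule ℂ E) : Set E)) {y : E}
    (hy : ∀ n, ⟪φ n + ψ n, CFC.sqrt (graphFst φ u ∘L (graphFst φ u).adjoint) y⟫ = 0) :
    CFC.sqrt (graphFst φ u ∘L (graphFst φ u).adjoint) y = 0 := by
  obtain ⟨p, hp⟩ := (graphFst φ u).range_sqrt_self_comp_adjoint_subset
    (denseRange_graphFst hcompφ) (Set.mem_range_self y)
  have hp0 : (p : WithLp 2 (E × E)) = 0 :=
    Submodule.eq_zero_of_mem_closure_span_range p.2 fun n => by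
      rw [← hy n, ← hp, ← ContinuousLinearMap.adjoint_inner_left,
        graphFst_adjoint_add hbi hu n]
      rfl
  rw [← hp]
  simp [hp0]

end GraphClosure

/-- Every regular sequence is a generalized Riesz system: if `{φ_n}` is minimal and complete and
its biorthogonal sequence `{ψ_n}` is also complete, then `{φ_n}` is a GRS. -/
theorem regular_is_GRS
    (φ ψ : ℕ → H)
    (hbi : ∀ n m, ⟪ψ n, φ m⟫ = if n = m then (1 : ℂ) else 0)
    (hcompφ : Dense ((Submodule.span ℂ (Set.range φ) : Submodule ℂ H) : Set H))
    (hcompψ : Dense ((Submodule.span ℂ (Set.range ψ) : Submodule ℂ H) : Set H)) :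
    IsGRS φ := by
  set u := InnerProductSpace.gramSchmidtNormed ℂ φ
  have hu : Orthonormal ℂ u :=
    InnerProductSpace.gramSchmidtNormed_orthonormal (linearIndependent_of_inner_eq_ite hbi)
  set P := graphFst φ u
  have hC₀ := P.self_comp_adjoint_nonneg
  have hC₁ : P ∘L P.adjoint ≤ 1 := P.self_comp_adjoint_le_one norm_graphFst_le
  have hC := P.injective_self_comp_adjoint_of_denseRange (denseRange_graphFst hcompφ)
  have hC' := injective_one_sub_graphFst_comp_adjoint hbi hu hcompψ
  have hφ (n : ℕ) : (P ∘L P.adjoint) (φ n + ψ n) = φ n := by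
    rw [ContinuousLinearMap.comp_apply, graphFst_adjoint_add hbi hu n]
    rfl
  exact isGRS_of_sqrt hC₀ hC₁ hC hC' hφ (isONB_sqrt_one_sub_sqrt hC₀ hC₁ hC hC' hbi hφ
    fun _ => sqrt_graphFst_comp_adjoint_eq_zero hbi hu hcompφ)
end
end

section
/- A sequence {φ_n} in a Hilbert space H is a Riesz basis with bounds 0 < a ≤ b (i.e., a‖f‖² ≤ Σ_n |⟨f, φ_n⟩|² ≤ b‖f‖² for all f ∈ H, together with minimality and completeness) if and only if there exist a bounded self-adjoint operator Q with spectrum σ(Q) ⊆ [ln a, ln b] and an orthonormal basis {e_n} of H such that φ_n = e^{Q/2}e_n. -/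
open scoped ComplexInnerProductSpace

noncomputable section

variable {H : Type*} [NormedAddCommGroup H] [InnerProductSpace ℂ H] [CompleteSpace H]

/-!
With `C f = (⟪φ n, f⟫)ₙ` the analysis operator of a Riesz basis, the frame operator `S = C† C`
satisfies `a ≤ S ≤ b`, so `Q = log S` has spectrum in `[log a, log b]` and `e^{Q/2} = S^{1/2}`.
The vectors `e n = S^{-1/2} φ n` are orthonormal because `⟪ψ n, S g⟫ = ⟪φ n, g⟫` for the
biorthogonal sequence `ψ`, i.e. `S⁻¹ φ` is biorthogonal to `φ`; they are complete because
`S^{-1/2}` is invertible. Conversely, for `P = e^{Q/2}` Parseval gives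
`∑ |⟪f, P e n⟫|² = ‖P f‖² = ⟪e^Q f, f⟫ ∈ [a‖f‖², b‖f‖²]`, and `P⁻¹ e` is biorthogonal to `P e`.
-/

open RCLike
open scoped InnerProductSpace lp InnerProduct

theorem IsSelfAdjoint.coe_units_inv {R : Type*} [Monoid R] [StarMul R] {u : Rˣ}
    (hu : IsSelfAdjoint (u : R)) : IsSelfAdjoint (↑u⁻¹ : R) := by
  rw [isSelfAdjoint_iff, ← Units.coe_star_inv, show star u = u from Units.ext hu.star_eq]

theorem lp.hasSum_norm_sq {ι : Type*} {E : ι → Type*} [∀ i, NormedAddCommGroup (E i)]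
    (f : lp E 2) : HasSum (fun i => ‖f i‖ ^ 2) (‖f‖ ^ 2) := by
  simpa using lp.hasSum_norm (p := 2) (by norm_num) f

theorem HilbertBasis.hasSum_norm_inner_sq {ι 𝕜 E : Type*} [RCLike 𝕜] [NormedAddCommGroup E]
    [InnerProductSpace 𝕜 E] (b : HilbertBasis ι 𝕜 E) (x : E) :
    HasSum (fun i => ‖⟪b i, x⟫_𝕜‖ ^ 2) (‖x‖ ^ 2) := by
  simpa [b.repr_apply_apply] using lp.hasSum_norm_sq (b.repr x)

theorem IsONB.hasSum_norm_inner_sq {e : ℕ → H} (he : IsONB e) (x : H) :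
    HasSum (fun n => ‖⟪x, e n⟫‖ ^ 2) (‖x‖ ^ 2) := by
  have hspan : ⊤ ≤ (Submodule.span ℂ (Set.range e)).topologicalClosure := by
    rw [top_le_iff, ← Submodule.dense_iff_topologicalClosure_eq_top]
    exact he.2
  simpa [norm_inner_symm x] using (HilbertBasis.mk he.1 hspan).hasSum_norm_inner_sq x

theorem DenseRange.dense_span_range_comp {ι 𝕜 E F : Type*} [NontriviallyNormedField 𝕜]
    [NormedAddCommGroup E] [NormedSpace 𝕜 E] [NormedAddCommGroup F] [NormedSpace 𝕜 F]
    {T : E →L[𝕜] F} (hT : DenseRange T) {v : ι → E}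
    (hv : Dense (Submodule.span 𝕜 (Set.range v) : Set E)) :
    Dense (Submodule.span 𝕜 (Set.range (T ∘ v)) : Set F) := by
  rw [Set.range_comp, ← ContinuousLinearMap.coe_coe, Submodule.span_image, Submodule.map_coe]
  exact hT.dense_image T.continuous hv

namespace ContinuousLinearMap

variable {E : Type*} [NormedAddCommGroup E] [InnerProductSpace ℂ E]

theorem re_inner_algebraMap_apply_self (r : ℝ) (x : E) :
    re ⟪algebraMap ℝ (E →L[ℂ] E) r x, x⟫ = r * ‖x‖ ^ 2 := by
  simp [Algebra.algebraMap_eq_smul_one, ← Complex.ofReal_pow]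

theorem algebraMap_le_iff_forall_re_inner {T : H →L[ℂ] H} (hT : IsSelfAdjoint T) (r : ℝ) :
    algebraMap ℝ (H →L[ℂ] H) r ≤ T ↔ ∀ x, r * ‖x‖ ^ 2 ≤ re ⟪T x, x⟫ := by
  simp only [le_def, isPositive_def', hT.sub (.algebraMap _ (.all r)), true_and,
    reApplyInnerSelf, sub_apply, inner_sub_left, map_sub, re_inner_algebraMap_apply_self,
    sub_nonneg]

theorem le_algebraMap_iff_forall_re_inner {T : H →L[ℂ] H} (hT : IsSelfAdjoint T) (r : ℝ) :
    T ≤ algebraMap ℝ (H →L[ℂ] H) r ↔ ∀ x, re ⟪T x, x⟫ ≤ r * ‖x‖ ^ 2 := by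
  simp only [le_def, isPositive_def', (IsSelfAdjoint.algebraMap _ (.all r)).sub hT, true_and,
    reApplyInnerSelf, sub_apply, inner_sub_left, map_sub, re_inner_algebraMap_apply_self,
    sub_nonneg]

theorem spectrum_subset_Icc_iff_forall_re_inner {T : H →L[ℂ] H} (hT : IsSelfAdjoint T)
    (a b : ℝ) : spectrum ℝ T ⊆ Set.Icc a b ↔
      ∀ x, a * ‖x‖ ^ 2 ≤ re ⟪T x, x⟫ ∧ re ⟪T x, x⟫ ≤ b * ‖x‖ ^ 2 := by
  simp only [forall_and, ← algebraMap_le_iff_forall_re_inner hT,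
    ← le_algebraMap_iff_forall_re_inner hT, algebraMap_le_iff_le_spectrum hT,
    le_algebraMap_iff_spectrum_le hT, Set.subset_def, Set.mem_Icc]

end ContinuousLinearMap

section Frame

variable {ι 𝕜 E : Type*} [RCLike 𝕜] [NormedAddCommGroup E] [InnerProductSpace 𝕜 E]

theorem memℓp_inner_of_summable {φ : ι → E} (hsum : ∀ x, Summable fun i => ‖⟪x, φ i⟫_𝕜‖ ^ 2)
    (x : E) : Memℓp (fun i => ⟪φ i, x⟫_𝕜) 2 :=
  memℓp_gen <| by simpa [norm_inner_symm x] using hsum x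

def analysisOp (φ : ι → E) (hsum : ∀ x, Summable fun i => ‖⟪x, φ i⟫_𝕜‖ ^ 2) {B : ℝ}
    (hB : ∀ x, ∑' i, ‖⟪x, φ i⟫_𝕜‖ ^ 2 ≤ B * ‖x‖ ^ 2) : E →L[𝕜] ℓ²(ι, 𝕜) :=
  LinearMap.mkContinuous
    { toFun x := ⟨fun i => ⟪φ i, x⟫_𝕜, memℓp_inner_of_summable hsum x⟩
      map_add' x y := by ext i; exact inner_add_right _ _ _
      map_smul' c x := by ext i; simp [inner_smul_right] }
    (√B) fun x => by
      rw [← Real.sqrt_sq (norm_nonneg _), ← Real.sqrt_sq (norm_nonneg x),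
        ← Real.sqrt_mul' _ (sq_nonneg _)]
      refine Real.sqrt_le_sqrt ?_
      rw [(lp.hasSum_norm_sq _).tsum_eq.symm]
      simpa [norm_inner_symm x] using hB x

variable {φ : ι → E} {hsum : ∀ x, Summable fun i => ‖⟪x, φ i⟫_𝕜‖ ^ 2} {B : ℝ}
  {hB : ∀ x, ∑' i, ‖⟪x, φ i⟫_𝕜‖ ^ 2 ≤ B * ‖x‖ ^ 2}

@[simp]
theorem analysisOp_apply (x : E) (i : ι) : analysisOp φ hsum hB x i = ⟪φ i, x⟫_𝕜 := rfl

theorem norm_analysisOp_sq (x : E) :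
    ‖analysisOp φ hsum hB x‖ ^ 2 = ∑' i, ‖⟪x, φ i⟫_𝕜‖ ^ 2 := by
  simp [(lp.hasSum_norm_sq _).tsum_eq.symm, norm_inner_symm x]

theorem analysisOp_eq_single_of_biorthogonal [DecidableEq ι] {ψ : ι → E}
    (hψ : ∀ i j, ⟪ψ i, φ j⟫_𝕜 = if i = j then 1 else 0) (i : ι) :
    analysisOp φ hsum hB (ψ i) = lp.single 2 i 1 := by
  ext j
  rw [analysisOp_apply, ← inner_conj_symm, hψ, lp.coeFn_single, Pi.single_apply]
  simp [apply_ite, eq_comm]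

variable [CompleteSpace E]

def frameOp (φ : ι → E) (hsum : ∀ x, Summable fun i => ‖⟪x, φ i⟫_𝕜‖ ^ 2) {B : ℝ}
    (hB : ∀ x, ∑' i, ‖⟪x, φ i⟫_𝕜‖ ^ 2 ≤ B * ‖x‖ ^ 2) : E →L[𝕜] E :=
  (analysisOp φ hsum hB)† ∘L analysisOp φ hsum hB

theorem isSelfAdjoint_frameOp : IsSelfAdjoint (frameOp φ hsum hB) :=
  (ContinuousLinearMap.isPositive_adjoint_comp_self _).isSelfAdjoint

theorem re_inner_frameOp_apply_self (x : E) :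
    re ⟪frameOp φ hsum hB x, x⟫_𝕜 = ∑' i, ‖⟪x, φ i⟫_𝕜‖ ^ 2 := by
  rw [frameOp, ← ContinuousLinearMap.apply_norm_sq_eq_inner_adjoint_left, norm_analysisOp_sq]

theorem inner_frameOp_of_biorthogonal [DecidableEq ι] {ψ : ι → E}
    (hψ : ∀ i j, ⟪ψ i, φ j⟫_𝕜 = if i = j then 1 else 0) (i : ι) (x : E) :
    ⟪ψ i, frameOp φ hsum hB x⟫_𝕜 = ⟪φ i, x⟫_𝕜 := by
  rw [frameOp, ContinuousLinearMap.comp_apply, ContinuousLinearMap.adjoint_inner_right,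
    analysisOp_eq_single_of_biorthogonal hψ, lp.inner_single_left]
  simp

theorem orthonormal_inv_apply_of_biorthogonal [DecidableEq ι] {ψ : ι → E}
    (hψ : ∀ i j, ⟪ψ i, φ j⟫_𝕜 = if i = j then 1 else 0) (P : (E →L[𝕜] E)ˣ)
    (hP : IsSelfAdjoint (P : E →L[𝕜] E)) (hPP : (P : E →L[𝕜] E) * P = frameOp φ hsum hB) :
    Orthonormal 𝕜 fun i => (↑P⁻¹ : E →L[𝕜] E) (φ i) := by
  have hS : ∀ x, frameOp φ hsum hB ((↑P⁻¹ : E →L[𝕜] E) ((↑P⁻¹ : E →L[𝕜] E) x)) = x := by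
    intro x
    rw [← hPP, ← mul_apply_eq_comp (↑P⁻¹ : E →L[𝕜] E), ← mul_apply_eq_comp, mul_assoc,
      P.mul_inv_cancel_left, P.mul_inv, one_apply_eq_self]
  rw [orthonormal_iff_ite]
  intro i j
  rw [← ContinuousLinearMap.adjoint_inner_right, hP.coe_units_inv.adjoint_eq,
    ← inner_frameOp_of_biorthogonal (hsum := hsum) (hB := hB) hψ, hS, hψ]

end Frame

theorem spectrum_frameOp_subset_Icc {ι : Type*} {φ : ι → H} {A B : ℝ}
    (hsum : ∀ x, Summable fun i => ‖⟪x, φ i⟫‖ ^ 2)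
    (hbounds : ∀ x, A * ‖x‖ ^ 2 ≤ ∑' i, ‖⟪x, φ i⟫‖ ^ 2 ∧ ∑' i, ‖⟪x, φ i⟫‖ ^ 2 ≤ B * ‖x‖ ^ 2) :
    spectrum ℝ (frameOp φ hsum fun x => (hbounds x).2) ⊆ Set.Icc A B := by
  simpa only [ContinuousLinearMap.spectrum_subset_Icc_iff_forall_re_inner isSelfAdjoint_frameOp,
    re_inner_frameOp_apply_self]

section ExpHalf

variable {A : Type*} [Ring A] [StarRing A] [Algebra ℝ A] [TopologicalSpace A]
  [ContinuousFunctionalCalculus ℝ A IsSelfAdjoint]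

def expHalfUnit (Q : A) (hQ : IsSelfAdjoint Q) : Aˣ :=
  cfcUnits (fun x : ℝ => Real.exp (x / 2)) Q (fun _ _ => (Real.exp_pos _).ne')

variable {Q : A}

theorem coe_expHalfUnit (hQ : IsSelfAdjoint Q) :
    (expHalfUnit Q hQ : A) = cfc (fun x : ℝ => Real.exp (x / 2)) Q := rfl

theorem isSelfAdjoint_coe_expHalfUnit (hQ : IsSelfAdjoint Q) :
    IsSelfAdjoint (expHalfUnit Q hQ : A) :=
  cfc_predicate _ _

theorem expHalfUnit_mul_self (hQ : IsSelfAdjoint Q) :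
    (expHalfUnit Q hQ : A) * expHalfUnit Q hQ = cfc Real.exp Q := by
  rw [coe_expHalfUnit, ← cfc_mul ..]
  exact cfc_congr fun x _ => by rw [← Real.exp_add, add_halves]

theorem spectrum_cfc_exp_subset_Icc (hQ : IsSelfAdjoint Q) {a b : ℝ} (ha : 0 < a) (hab : a ≤ b)
    (hspec : spectrum ℝ Q ⊆ Set.Icc (Real.log a) (Real.log b)) :
    spectrum ℝ (cfc Real.exp Q) ⊆ Set.Icc a b := by
  rw [cfc_map_spectrum ..]
  rintro _ ⟨x, hx, rfl⟩
  rw [← Real.exp_log ha, ← Real.exp_log (ha.trans_le hab)]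
  exact ⟨Real.exp_le_exp.2 (hspec hx).1, Real.exp_le_exp.2 (hspec hx).2⟩

end ExpHalf

section Log

variable {A : Type*} [NormedRing A] [StarRing A] [NormedAlgebra ℝ A]
  [ContinuousFunctionalCalculus ℝ A IsSelfAdjoint] {S : A}

theorem cfc_exp_log (hS : IsSelfAdjoint S) (hpos : ∀ x ∈ spectrum ℝ S, 0 < x) :
    cfc Real.exp (CFC.log S) = S := by
  have hlog : ContinuousOn Real.log (spectrum ℝ S) :=
    Real.continuousOn_log.mono fun x hx => (hpos x hx).ne'
  rw [CFC.log, ← cfc_comp' Real.exp Real.log S]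
  conv_rhs => rw [← cfc_id ℝ S]
  exact cfc_congr fun x hx => Real.exp_log (hpos x hx)

theorem spectrum_log_subset_Icc (hS : IsSelfAdjoint S) {a b : ℝ} (ha : 0 < a)
    (hspec : spectrum ℝ S ⊆ Set.Icc a b) :
    spectrum ℝ (CFC.log S) ⊆ Set.Icc (Real.log a) (Real.log b) := by
  have hpos : ∀ x ∈ spectrum ℝ S, 0 < x := fun x hx => ha.trans_le (hspec hx).1
  have hlog : ContinuousOn Real.log (spectrum ℝ S) :=
    Real.continuousOn_log.mono fun x hx => (hpos x hx).ne'
  rw [CFC.log, cfc_map_spectrum ..]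
  rintro _ ⟨x, hx, rfl⟩
  exact ⟨Real.log_le_log ha (hspec hx).1, Real.log_le_log (hpos x hx) (hspec hx).2⟩

end Log

def IsRieszBasis (φ : ℕ → H) (a b : ℝ) : Prop :=
  (∃ ψ : ℕ → H, ∀ n m, ⟪ψ n, φ m⟫ = if n = m then (1 : ℂ) else 0) ∧
    Dense ((Submodule.span ℂ (Set.range φ) : Submodule ℂ H) : Set H) ∧
    (∀ f : H, Summable fun n => ‖⟪f, φ n⟫‖ ^ 2) ∧
    (∀ f : H, a * ‖f‖ ^ 2 ≤ ∑' n, ‖⟪f, φ n⟫‖ ^ 2 ∧ ∑' n, ‖⟪f, φ n⟫‖ ^ 2 ≤ b * ‖f‖ ^ 2)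

open ContinuousLinearMap in
theorem inner_units_inv_apply_apply {𝕜 E : Type*} [RCLike 𝕜] [NormedAddCommGroup E]
    [InnerProductSpace 𝕜 E] [CompleteSpace E] {P : (E →L[𝕜] E)ˣ}
    (hP : IsSelfAdjoint (P : E →L[𝕜] E)) (x y : E) :
    ⟪(↑P⁻¹ : E →L[𝕜] E) x, (P : E →L[𝕜] E) y⟫_𝕜 = ⟪x, y⟫_𝕜 := by
  rw [← adjoint_inner_right, hP.coe_units_inv.adjoint_eq, ← mul_apply_eq_comp, P.inv_mul,
    one_apply_eq_self]

open ContinuousLinearMap in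
theorem IsONB.hasSum_norm_inner_apply_sq {e : ℕ → H} (he : IsONB e) {P : H →L[ℂ] H}
    (hP : IsSelfAdjoint P) (x : H) :
    HasSum (fun n => ‖⟪x, P (e n)⟫‖ ^ 2) (re ⟪(P * P) x, x⟫) := by
  have hsymm (n : ℕ) : ⟪x, P (e n)⟫ = ⟪P x, e n⟫ := by
    rw [← adjoint_inner_right, hP.adjoint_eq]
  rw [show P * P = P† ∘L P by rw [hP.adjoint_eq]; rfl, ← apply_norm_sq_eq_inner_adjoint_left]
  simpa only [hsymm] using he.hasSum_norm_inner_sq (P x)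

theorem IsONB.isRieszBasis_units_apply {e : ℕ → H} (he : IsONB e) {P : (H →L[ℂ] H)ˣ}
    (hP : IsSelfAdjoint (P : H →L[ℂ] H)) {a b : ℝ}
    (hspec : spectrum ℝ ((P : H →L[ℂ] H) * P) ⊆ Set.Icc a b) :
    IsRieszBasis (fun n => (P : H →L[ℂ] H) (e n)) a b := by
  refine ⟨⟨fun n => (↑P⁻¹ : H →L[ℂ] H) (e n), fun n m => ?_⟩,
    (ContinuousLinearMap.homeomorphOfUnit P).surjective.denseRange.dense_span_range_comp he.2,
    fun f => (he.hasSum_norm_inner_apply_sq hP f).summable, fun f => ?_⟩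
  · rw [inner_units_inv_apply_apply hP, orthonormal_iff_ite.1 he.1]
  · have hPP : IsSelfAdjoint ((P : H →L[ℂ] H) * P) := by
      simpa only [hP.star_eq] using IsSelfAdjoint.star_mul_self (P : H →L[ℂ] H)
    rw [(he.hasSum_norm_inner_apply_sq hP f).tsum_eq]
    exact (ContinuousLinearMap.spectrum_subset_Icc_iff_forall_re_inner hPP a b).1 hspec f

theorem IsRieszBasis.exists_selfAdjoint_isONB {φ : ℕ → H} {a b : ℝ}
    (hφ : IsRieszBasis φ a b) (ha : 0 < a) :
    ∃ (Q : H →L[ℂ] H) (e : ℕ → H), IsSelfAdjoint Q ∧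
      spectrum ℝ Q ⊆ Set.Icc (Real.log a) (Real.log b) ∧ IsONB e ∧
      ∀ n, φ n = cfc (fun x : ℝ => Real.exp (x / 2)) Q (e n) := by
  obtain ⟨⟨ψ, hψ⟩, hdense, hsum, hbounds⟩ := hφ
  set S := frameOp φ hsum fun f => (hbounds f).2
  have hS : IsSelfAdjoint S := isSelfAdjoint_frameOp
  have hspec : spectrum ℝ S ⊆ Set.Icc a b := spectrum_frameOp_subset_Icc hsum hbounds
  have hQ : IsSelfAdjoint (CFC.log S) := IsSelfAdjoint.log
  set P := expHalfUnit (CFC.log S) hQ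
  have hPP : (P : H →L[ℂ] H) * P = S :=
    (expHalfUnit_mul_self hQ).trans (cfc_exp_log hS fun x hx => ha.trans_le (hspec hx).1)
  refine ⟨CFC.log S, fun n => (↑P⁻¹ : H →L[ℂ] H) (φ n), hQ, spectrum_log_subset_Icc hS ha hspec,
    ⟨orthonormal_inv_apply_of_biorthogonal hψ P (isSelfAdjoint_coe_expHalfUnit hQ) hPP,
      (ContinuousLinearMap.homeomorphOfUnit P⁻¹).surjective.denseRange.dense_span_range_comp
        hdense⟩, fun n => (DFunLike.congr_fun P.mul_inv (φ n)).symm⟩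

/-- A sequence `{φ_n}` is a Riesz basis with bounds `0 < a ≤ b` (minimal, complete, and
`a‖f‖² ≤ Σ_n |⟨f, φ_n⟩|² ≤ b‖f‖²` for all `f`) if and only if there exist a bounded
self-adjoint operator `Q` with `σ(Q) ⊆ [ln a, ln b]` and an orthonormal basis `{e_n}` such that
`φ_n = e^{Q/2} e_n`. -/
theorem riesz_basis_iff_bounded_Q
    (φ : ℕ → H) (a b : ℝ) (ha : 0 < a) (hab : a ≤ b) :
    ((∃ ψ : ℕ → H, ∀ n m, ⟪ψ n, φ m⟫ = if n = m then (1 : ℂ) else 0) ∧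
      Dense ((Submodule.span ℂ (Set.range φ) : Submodule ℂ H) : Set H) ∧
      (∀ f : H, Summable fun n => ‖⟪f, φ n⟫‖ ^ 2) ∧
      (∀ f : H, a * ‖f‖ ^ 2 ≤ ∑' n, ‖⟪f, φ n⟫‖ ^ 2 ∧ ∑' n, ‖⟪f, φ n⟫‖ ^ 2 ≤ b * ‖f‖ ^ 2))
    ↔
    (∃ (Q : H →L[ℂ] H) (e : ℕ → H), IsSelfAdjoint Q ∧
      spectrum ℝ Q ⊆ Set.Icc (Real.log a) (Real.log b) ∧ IsONB e ∧
      ∀ n, φ n = cfc (fun x : ℝ => Real.exp (x / 2)) Q (e n)) := by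
  refine ⟨fun hφ => IsRieszBasis.exists_selfAdjoint_isONB hφ ha, ?_⟩
  rintro ⟨Q, e, hQ, hspec, he, hφ⟩
  obtain rfl : φ = fun n => (expHalfUnit Q hQ : H →L[ℂ] H) (e n) := funext hφ
  refine he.isRieszBasis_units_apply (isSelfAdjoint_coe_expHalfUnit hQ) ?_
  rw [expHalfUnit_mul_self]
  exact spectrum_cfc_exp_subset_Icc hQ ha hab hspec
end
end

section
/- Let J be a fundamental symmetry on a Hilbert space H and let {φ_n} be a complete J-orthonormal sequence. Then {φ_n} is a Bessel sequence if and only if {φ_n} is a Riesz basis. -/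
/-!
A complete `J`-orthonormal sequence `φ` has the biorthogonal sequence `ψ n = [φ n, φ n] J φ n`,
which is Bessel whenever `φ` is, with bound `b ‖J‖²`, because `⟪f, J φ n⟫ = ⟪J* f, φ n⟫`.
Density of the span of `φ` then gives the expansion `⟪f, x⟫ = ∑ ⟪f, φ n⟫ ⟪ψ n, x⟫`, and
Cauchy–Schwarz at `x = f` yields the lower frame bound `‖f‖² ≤ b ‖J‖² ∑ |⟪f, φ n⟫|²`.
-/

open scoped ComplexInnerProductSpace InnerProduct

theorem summable_mul_of_summable_sq {ι : Type*} {f g : ι → ℝ} (hf : Summable fun i => f i ^ 2)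
    (hg : Summable fun i => g i ^ 2) : Summable fun i => f i * g i := by
  refine Summable.of_norm_bounded ((hf.add hg).div_const 2) fun i => ?_
  rw [Real.norm_eq_abs, abs_mul]
  nlinarith [two_mul_le_add_sq |f i| |g i|, sq_abs (f i), sq_abs (g i)]

theorem tsum_mul_le_sqrt_mul_sqrt {ι : Type*} {f g : ι → ℝ} (hf : Summable fun i => f i ^ 2)
    (hg : Summable fun i => g i ^ 2) :
    ∑' i, f i * g i ≤ √(∑' i, f i ^ 2) * √(∑' i, g i ^ 2) := by
  refine (summable_mul_of_summable_sq hf hg).tsum_le_of_sum_le fun s => ?_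
  refine (Real.sum_mul_le_sqrt_mul_sqrt s f g).trans ?_
  gcongr
  · exact hf.sum_le_tsum s fun i _ => sq_nonneg (f i)
  · exact hg.sum_le_tsum s fun i _ => sq_nonneg (g i)

section Bessel

variable {ι E F : Type*} [NormedAddCommGroup E] [InnerProductSpace ℂ E]
  [NormedAddCommGroup F] [InnerProductSpace ℂ F]

def HasBesselBound (φ : ι → E) (b : ℝ) : Prop :=
  ∀ f : E, Summable (fun n => ‖⟪f, φ n⟫‖ ^ 2) ∧ ∑' n, ‖⟪f, φ n⟫‖ ^ 2 ≤ b * ‖f‖ ^ 2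

theorem inner_smul_left_eq_ite_of_norm_inner_eq_ite [DecidableEq ι] {χ φ : ι → E}
    (h : ∀ n m, ‖⟪χ n, φ m⟫‖ = if n = m then (1 : ℝ) else 0) (n m : ι) :
    ⟪⟪χ n, φ n⟫ • χ n, φ m⟫ = if n = m then 1 else 0 := by
  rw [inner_smul_left]
  split_ifs with hnm
  · subst hnm
    rw [RCLike.conj_mul, h, if_pos rfl]
    simp
  · rw [norm_eq_zero.mp ((h n m).trans (if_neg hnm)), mul_zero]

theorem HasBesselBound.map [CompleteSpace E] [CompleteSpace F] {φ : ι → F} {b : ℝ}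
    (hφ : HasBesselBound φ b) (hb : 0 ≤ b) (T : F →L[ℂ] E) :
    HasBesselBound (fun n => T (φ n)) (b * ‖T‖ ^ 2) := by
  intro f
  simp only [← ContinuousLinearMap.adjoint_inner_left]
  refine ⟨(hφ _).1, (hφ _).2.trans ?_⟩
  calc b * ‖(T†) f‖ ^ 2 ≤ b * (‖T†‖ * ‖f‖) ^ 2 := by gcongr; exact (T†).le_opNorm f
    _ = b * ‖T‖ ^ 2 * ‖f‖ ^ 2 := by rw [LinearIsometryEquiv.norm_map]; ring

theorem HasBesselBound.smul {φ : ι → E} {b : ℝ} (hφ : HasBesselBound φ b) {c : ι → ℂ}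
    (hc : ∀ n, ‖c n‖ ≤ 1) : HasBesselBound (fun n => c n • φ n) b := by
  intro f
  have hle : ∀ n, ‖⟪f, c n • φ n⟫‖ ^ 2 ≤ ‖⟪f, φ n⟫‖ ^ 2 := fun n => by
    rw [inner_smul_right, norm_mul]
    gcongr
    exact mul_le_of_le_one_left (norm_nonneg _) (hc n)
  have hsum := Summable.of_nonneg_of_le (fun n => sq_nonneg _) hle (hφ f).1
  exact ⟨hsum, (hsum.tsum_le_tsum hle (hφ f).1).trans (hφ f).2⟩

theorem HasBesselBound.tsum_norm_inner_mul_inner_le {φ ψ : ι → E} {B : ℝ}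
    (hψ : HasBesselBound ψ B) {f : E} (hf : Summable fun n => ‖⟪f, φ n⟫‖ ^ 2) (x : E) :
    Summable (fun n => ‖⟪f, φ n⟫ * ⟪ψ n, x⟫‖) ∧
      ∑' n, ‖⟪f, φ n⟫ * ⟪ψ n, x⟫‖ ≤ √(∑' n, ‖⟪f, φ n⟫‖ ^ 2) * √B * ‖x‖ := by
  simp only [norm_mul, norm_inner_symm (ψ _) x]
  refine ⟨summable_mul_of_summable_sq hf (hψ x).1,
    (tsum_mul_le_sqrt_mul_sqrt hf (hψ x).1).trans ?_⟩
  rw [mul_assoc, ← Real.sqrt_sq (norm_nonneg x), ← Real.sqrt_mul' _ (sq_nonneg _)]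
  gcongr
  exact (hψ x).2

theorem HasBesselBound.inner_eq_tsum_of_biorthogonal [DecidableEq ι] {φ ψ : ι → E} {B : ℝ}
    (hψ : HasBesselBound ψ B) (hbi : ∀ n m, ⟪ψ n, φ m⟫ = if n = m then 1 else 0)
    (hdense : Dense ((Submodule.span ℂ (Set.range φ) : Submodule ℂ E) : Set E)) {f : E}
    (hf : Summable fun n => ‖⟪f, φ n⟫‖ ^ 2) (x : E) :
    ⟪f, x⟫ = ∑' n, ⟪f, φ n⟫ * ⟪ψ n, x⟫ := by
  have hsum x := (hψ.tsum_norm_inner_mul_inner_le hf x).1.of_norm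
  let expansion : E →L[ℂ] ℂ := LinearMap.mkContinuous
    { toFun := fun x => ∑' n, ⟪f, φ n⟫ * ⟪ψ n, x⟫
      map_add' := fun x y => by
        simp only [inner_add_right, mul_add]
        exact (hsum x).tsum_add (hsum y)
      map_smul' := fun c x => by
        simp only [inner_smul_right, mul_left_comm _ c, tsum_mul_left, smul_eq_mul,
          RingHom.id_apply] }
    _ fun x => (norm_tsum_le_tsum_norm (hψ.tsum_norm_inner_mul_inner_le hf x).1).trans
      (hψ.tsum_norm_inner_mul_inner_le hf x).2
  have hexp : innerSL ℂ f = expansion := by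
    refine ContinuousLinearMap.ext_on hdense ?_
    rintro _ ⟨m, rfl⟩
    simp [expansion, hbi]
  exact congr($hexp x)

theorem HasBesselBound.norm_sq_le_of_biorthogonal [DecidableEq ι] {φ ψ : ι → E} {B : ℝ}
    (hψ : HasBesselBound ψ B) (hbi : ∀ n m, ⟪ψ n, φ m⟫ = if n = m then 1 else 0)
    (hdense : Dense ((Submodule.span ℂ (Set.range φ) : Submodule ℂ E) : Set E)) {f : E}
    (hf : Summable fun n => ‖⟪f, φ n⟫‖ ^ 2) :
    ‖f‖ ^ 2 ≤ B * ∑' n, ‖⟪f, φ n⟫‖ ^ 2 := by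
  set S := ∑' n, ‖⟪f, φ n⟫‖ ^ 2
  rcases (norm_nonneg f).eq_or_lt with hf0 | hf0
  · obtain rfl : f = 0 := norm_eq_zero.mp hf0.symm
    simp [S]
  have hcs : ‖f‖ ^ 2 ≤ √(S * B) * ‖f‖ := by
    calc ‖f‖ ^ 2 = ‖⟪f, f⟫‖ := by rw [inner_self_eq_norm_sq_to_K]; simp
      _ = ‖∑' n, ⟪f, φ n⟫ * ⟪ψ n, f⟫‖ := by rw [← hψ.inner_eq_tsum_of_biorthogonal hbi hdense hf]
      _ ≤ ∑' n, ‖⟪f, φ n⟫ * ⟪ψ n, f⟫‖ :=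
        norm_tsum_le_tsum_norm (hψ.tsum_norm_inner_mul_inner_le hf f).1
      _ ≤ √S * √B * ‖f‖ := (hψ.tsum_norm_inner_mul_inner_le hf f).2
      _ = √(S * B) * ‖f‖ := by rw [Real.sqrt_mul (tsum_nonneg fun n => sq_nonneg _)]
  have hfS : ‖f‖ ≤ √(S * B) := le_of_mul_le_mul_right (by nlinarith [hcs]) hf0
  rw [mul_comm]
  exact (Real.le_sqrt' hf0).mp hfS

end Bessel

variable {H : Type*} [NormedAddCommGroup H] [InnerProductSpace ℂ H] [CompleteSpace H]

theorem complete_Jorthonormal_bessel_iff_riesz_general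
    (J : H →L[ℂ] H)
    (φ : ℕ → H)
    (hJon : ∀ n m, ‖⟪J (φ n), φ m⟫‖ = if n = m then (1 : ℝ) else 0)
    (hcomp : Dense ((Submodule.span ℂ (Set.range φ) : Submodule ℂ H) : Set H)) :
    (∃ b > (0 : ℝ), ∀ f : H, Summable (fun n => ‖⟪f, φ n⟫‖ ^ 2) ∧
        ∑' n, ‖⟪f, φ n⟫‖ ^ 2 ≤ b * ‖f‖ ^ 2)
    ↔
    (∃ a b : ℝ, 0 < a ∧ a ≤ b ∧ ∀ f : H, Summable (fun n => ‖⟪f, φ n⟫‖ ^ 2) ∧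
        a * ‖f‖ ^ 2 ≤ ∑' n, ‖⟪f, φ n⟫‖ ^ 2 ∧ ∑' n, ‖⟪f, φ n⟫‖ ^ 2 ≤ b * ‖f‖ ^ 2) := by
  refine ⟨fun ⟨b, hb, (hφ : HasBesselBound φ b)⟩ => ?_,
    fun ⟨a, b, ha, hab, h⟩ => ⟨b, ha.trans_le hab, fun f => ⟨(h f).1, (h f).2.2⟩⟩⟩
  have hψ : HasBesselBound (fun n => ⟪J (φ n), φ n⟫ • J (φ n)) (b * ‖J‖ ^ 2) :=
    (hφ.map hb.le J).smul fun n => by rw [hJon n n, if_pos rfl]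
  have hJ : 0 < ‖J‖ := norm_pos_iff.mpr fun hJ0 => by simpa [hJ0] using hJon 0 0
  have hB : 0 < b * ‖J‖ ^ 2 := by positivity
  refine ⟨min b (b * ‖J‖ ^ 2)⁻¹, b, lt_min hb (inv_pos.mpr hB), min_le_left _ _,
    fun f => ⟨(hφ f).1, ?_, (hφ f).2⟩⟩
  calc min b (b * ‖J‖ ^ 2)⁻¹ * ‖f‖ ^ 2 ≤ (b * ‖J‖ ^ 2)⁻¹ * ‖f‖ ^ 2 := by
        gcongr; exact min_le_right _ _
    _ ≤ ∑' n, ‖⟪f, φ n⟫‖ ^ 2 := by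
        rw [inv_mul_le_iff₀ hB]
        exact hψ.norm_sq_le_of_biorthogonal (inner_smul_left_eq_ite_of_norm_inner_eq_ite hJon)
          hcomp (hφ f).1

/-- A complete `J`-orthonormal sequence is a Bessel sequence if and only if it is a Riesz basis
(in the sense of the two-sided frame inequality). -/
theorem complete_Jorthonormal_bessel_iff_riesz
    (J : H →L[ℂ] H) (hJsa : IsSelfAdjoint J) (hJ2 : ∀ f : H, J (J f) = f)
    (φ : ℕ → H)
    (hJon : ∀ n m, ‖⟪J (φ n), φ m⟫‖ = if n = m then (1 : ℝ) else 0)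
    (hcomp : Dense ((Submodule.span ℂ (Set.range φ) : Submodule ℂ H) : Set H)) :
    (∃ b > (0 : ℝ), ∀ f : H, Summable (fun n => ‖⟪f, φ n⟫‖ ^ 2) ∧
        ∑' n, ‖⟪f, φ n⟫‖ ^ 2 ≤ b * ‖f‖ ^ 2)
    ↔
    (∃ a b : ℝ, 0 < a ∧ a ≤ b ∧ ∀ f : H, Summable (fun n => ‖⟪f, φ n⟫‖ ^ 2) ∧
        a * ‖f‖ ^ 2 ≤ ∑' n, ‖⟪f, φ n⟫‖ ^ 2 ∧ ∑' n, ‖⟪f, φ n⟫‖ ^ 2 ≤ b * ‖f‖ ^ 2) :=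
  complete_Jorthonormal_bessel_iff_riesz_general J φ hJon hcomp
end

section
/- Let {𝖾_n}_{n≥0} be an orthonormal basis of a Hilbert space H and for real parameters α, β set φ_n = n^{-β}𝖾_n + n^{-α}𝖾_0 for n ≥ 1. Then {φ_n}_{n≥1} is minimal with biorthogonal sequence ψ_n = n^{β}𝖾_n, and {φ_n}_{n≥1} is complete in H if and only if α - β ≤ 1/2. -/
/-!
Up to nonzero scalars, `φ (n + 1)` is `e (n + 1) + w n • e 0` with `w n = (n + 1) ^ (β - α)`.
In the coordinates `c` of the basis, `x` is orthogonal to all of these iff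
`c (n + 1) = -w n * c 0` for every `n`; so a nonzero such `x` exists iff `w` is square-summable,
i.e. iff `2 (β - α) < -1`.
-/

open scoped ComplexInnerProductSpace

noncomputable section

variable {H : Type*} [NormedAddCommGroup H] [InnerProductSpace ℂ H] [CompleteSpace H]

open Set Submodule ComplexConjugate

section Memℓp

variable {E : Type*} [NormedAddCommGroup E] {p : ENNReal}

theorem memℓp_nat_add_one_iff (hp : 0 < p.toReal) {f : ℕ → E} :
    Memℓp (fun n ↦ f (n + 1)) p ↔ Memℓp f p := by
  simp only [memℓp_gen_iff hp]
  exact summable_nat_add_iff (f := fun n ↦ ‖f n‖ ^ p.toReal) 1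

theorem memℓp_two_rpow_add_one_iff {𝕜 : Type*} [RCLike 𝕜] (s : ℝ) :
    Memℓp (fun n : ℕ ↦ ((((n : ℝ) + 1) ^ s : ℝ) : 𝕜)) 2 ↔ s < -1 / 2 := by
  have hnorm (n : ℕ) : ‖((((n : ℝ) + 1) ^ s : ℝ) : 𝕜)‖ ^ (2 : ENNReal).toReal
      = (((n + 1 : ℕ) : ℝ)) ^ (s * 2) := by
    rw [RCLike.norm_ofReal, abs_of_nonneg (by positivity), ← Real.rpow_mul (by positivity)]
    norm_num
  rw [memℓp_gen_iff (by norm_num), funext hnorm,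
    summable_nat_add_iff (f := fun n : ℕ ↦ (n : ℝ) ^ (s * 2)) 1, Real.summable_nat_rpow]
  constructor <;> intro h <;> linarith

end Memℓp

theorem Submodule.span_range_smul_of_ne_zero {K M ι : Type*} [DivisionRing K] [AddCommGroup M]
    [Module K M] {c : ι → K} (hc : ∀ i, c i ≠ 0) (v : ι → M) :
    span K (range fun i ↦ c i • v i) = span K (range v) := by
  apply le_antisymm <;> rw [span_le, range_subset_iff] <;> intro i
  · exact smul_mem _ _ (subset_span (mem_range_self i))
  · rw [← inv_smul_smul₀ (hc i) (v i)]
    exact smul_mem _ _ (subset_span (mem_range_self i))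

section InnerProductSpace

variable {𝕜 E : Type*} [RCLike 𝕜] [NormedAddCommGroup E] [InnerProductSpace 𝕜 E]

theorem Submodule.mem_orthogonal_span_range_iff {ι : Type*} (v : ι → E) (x : E) :
    x ∈ (span 𝕜 (range v))ᗮ ↔ ∀ i, inner 𝕜 (v i) x = 0 := by
  simp [← span_singleton_le_iff_mem, ← isOrtho_iff_le, isOrtho_span, inner_eq_zero_symm]

theorem Orthonormal.inner_rpow_smul_rpow_smul_add {e : ℕ → E} (he : Orthonormal 𝕜 e) (α β : ℝ)
    {n : ℕ} (hn : n ≠ 0) (m : ℕ) :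
    inner 𝕜 ((((n : ℝ) ^ β : ℝ) : 𝕜) • e n)
      ((((m : ℝ) ^ (-β) : ℝ) : 𝕜) • e m + (((m : ℝ) ^ (-α) : ℝ) : 𝕜) • e 0)
      = if n = m then 1 else 0 := by
  simp only [inner_add_right, inner_smul_left, inner_smul_right, orthonormal_iff_ite.mp he,
    if_neg hn, RCLike.conj_ofReal, mul_zero, add_zero]
  split_ifs with h
  · subst h
    have hn' : (0 : ℝ) < n := by positivity
    rw [mul_one, ← RCLike.ofReal_mul, ← Real.rpow_add hn', neg_add_cancel, Real.rpow_zero,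
      RCLike.ofReal_one]
  · rw [mul_zero, mul_zero]

namespace HilbertBasis

variable (b : HilbertBasis ℕ 𝕜 E) (w : ℕ → 𝕜)

theorem inner_succ_add_smul_zero (x : E) (n : ℕ) :
    inner 𝕜 (b (n + 1) + w n • b 0) x = b.repr x (n + 1) + conj (w n) * b.repr x 0 := by
  rw [inner_add_left, inner_smul_left, b.repr_apply_apply, b.repr_apply_apply]

theorem mem_orthogonal_span_succ_add_smul_zero_iff (x : E) :
    x ∈ (span 𝕜 (range fun n ↦ b (n + 1) + w n • b 0))ᗮ ↔
      ∀ n, b.repr x (n + 1) = -(conj (w n) * b.repr x 0) := by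
  simp only [mem_orthogonal_span_range_iff, inner_succ_add_smul_zero, add_eq_zero_iff_eq_neg]

theorem memℓp_of_mem_orthogonal_span_succ_add_smul_zero {x : E}
    (hx : x ∈ (span 𝕜 (range fun n ↦ b (n + 1) + w n • b 0))ᗮ) (h0 : b.repr x 0 ≠ 0) :
    Memℓp w 2 := by
  rw [mem_orthogonal_span_succ_add_smul_zero_iff] at hx
  have hw : (‖w ·‖) = fun n ↦ ‖b.repr x 0‖⁻¹ * ‖b.repr x (n + 1)‖ := by
    ext n
    rw [hx n, norm_neg, norm_mul, RCLike.norm_conj, mul_comm ‖w n‖,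
      inv_mul_cancel_left₀ (norm_ne_zero_iff.mpr h0)]
  rw [← memℓp_norm_iff, hw]
  exact (((memℓp_nat_add_one_iff (by norm_num)).mpr (b.repr x).prop).norm).const_mul _

theorem exists_ne_zero_mem_orthogonal_span_succ_add_smul_zero (hw : Memℓp w 2) :
    ∃ x ≠ 0, x ∈ (span 𝕜 (range fun n ↦ b (n + 1) + w n • b 0))ᗮ := by
  let c : ℕ → 𝕜 := fun
    | 0 => 1
    | n + 1 => -conj (w n)
  have hc : Memℓp c 2 :=
    (memℓp_nat_add_one_iff (by norm_num)).mp (memℓp_norm_iff.mp (by simpa [c] using hw.norm))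
  refine ⟨b.repr.symm ⟨c, hc⟩, fun h ↦ ?_, ?_⟩
  · simpa [c] using congrArg (fun x ↦ b.repr x 0) h
  · simp [mem_orthogonal_span_succ_add_smul_zero_iff, c]

theorem dense_span_succ_add_smul_zero_iff [CompleteSpace E] :
    Dense (span 𝕜 (range fun n ↦ b (n + 1) + w n • b 0) : Set E) ↔ ¬ Memℓp w 2 := by
  rw [dense_iff_topologicalClosure_eq_top, topologicalClosure_eq_top_iff]
  constructor
  · intro h hw
    obtain ⟨x, hx0, hx⟩ := b.exists_ne_zero_mem_orthogonal_span_succ_add_smul_zero w hw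
    exact hx0 (by simpa [h] using hx)
  · intro hw
    rw [eq_bot_iff]
    intro x hx
    have h0 : b.repr x 0 = 0 :=
      by_contra fun h0 ↦ hw (b.memℓp_of_mem_orthogonal_span_succ_add_smul_zero w hx h0)
    rw [mem_orthogonal_span_succ_add_smul_zero_iff] at hx
    rw [mem_bot, ← b.repr.map_eq_zero_iff]
    ext n
    cases n with
    | zero => exact h0
    | succ n => simp [hx n, h0]

end HilbertBasis

end InnerProductSpace

theorem IsONB.exists_hilbertBasis {e : ℕ → H} (he : IsONB e) :
    ∃ b : HilbertBasis ℕ ℂ H, ⇑b = e :=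
  ⟨HilbertBasis.mk he.1 (Submodule.dense_iff_topologicalClosure_eq_top.mp he.2).ge,
    HilbertBasis.coe_mk _ _⟩

/-- For an orthonormal basis `{ee_n}_{n ≥ 0}` and `φ_n = n^{-β}ee_n + n^{-α}ee_0` (`n ≥ 1`):
the sequence `{ψ_n = n^{β}ee_n}` is biorthogonal to `{φ_n}` (so `{φ_n}` is minimal), and
`{φ_n}_{n ≥ 1}` is complete in `H` if and only if `α - β ≤ 1/2`. -/
theorem shifted_basis_minimal_and_complete_iff
    (ee : ℕ → H) (hee : IsONB ee) (α β : ℝ) :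
    (∀ n m : ℕ, 1 ≤ n → 1 ≤ m →
      ⟪((((n : ℝ) ^ β : ℝ)) : ℂ) • ee n,
        ((((m : ℝ) ^ (-β) : ℝ)) : ℂ) • ee m + ((((m : ℝ) ^ (-α) : ℝ)) : ℂ) • ee 0⟫
        = if n = m then (1 : ℂ) else 0) ∧
    (Dense ((Submodule.span ℂ
        ((fun n : ℕ => ((((n : ℝ) ^ (-β) : ℝ)) : ℂ) • ee n
            + ((((n : ℝ) ^ (-α) : ℝ)) : ℂ) • ee 0) '' {n : ℕ | 1 ≤ n})
        : Submodule ℂ H) : Set H)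
      ↔ α - β ≤ 1 / 2) := by
  refine ⟨fun n m hn _ ↦ hee.1.inner_rpow_smul_rpow_smul_add α β (by omega) m, ?_⟩
  obtain ⟨b, rfl⟩ := hee.exists_hilbertBasis
  have hspan : span ℂ ((fun n : ℕ ↦ (((n : ℝ) ^ (-β) : ℝ) : ℂ) • b n
      + (((n : ℝ) ^ (-α) : ℝ) : ℂ) • b 0) '' {n | 1 ≤ n}) =
      span ℂ (range fun n : ℕ ↦ b (n + 1) + ((((n : ℝ) + 1) ^ (β - α) : ℝ) : ℂ) • b 0) := by
    rw [← span_range_smul_of_ne_zero (c := fun n : ℕ ↦ ((((n : ℝ) + 1) ^ (-β) : ℝ) : ℂ))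
      (fun n ↦ Complex.ofReal_ne_zero.mpr (by positivity)), show {n : ℕ | 1 ≤ n} = range Nat.succ
      from Nat.range_succ.symm, ← range_comp]
    congr 2
    ext n
    have hn : (0 : ℝ) < n + 1 := by positivity
    simp only [Function.comp_apply, Nat.succ_eq_add_one, Nat.cast_add_one, smul_add, smul_smul,
      ← Complex.ofReal_mul, ← Real.rpow_add hn, show -β + (β - α) = -α by ring]
  rw [hspan, b.dense_span_succ_add_smul_zero_iff]
  refine (not_congr (memℓp_two_rpow_add_one_iff (β - α))).trans ?_
  rw [not_lt]
  constructor <;> intro h <;> linarith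
end
end

section
/- Let {𝖾_n}_{n≥0} be an orthonormal basis of H and φ_n = n^{-β}𝖾_n + n^{-α}𝖾_0 (n ≥ 1) with β ≤ 0 and α - β ≤ 1/2. Then the closure of the operator S defined by Sφ_n = n^{β}𝖾_n (extended linearly to span{φ_n}) annihilates 𝖾_0 (S̄𝖾_0 = 0); consequently S̄ is not positive and {φ_n} is a semi-regular sequence that is not a generalized Riesz system. -/
open scoped ComplexInnerProductSpace
open Filter Topology

noncomputable section

variable {H : Type*} [NormedAddCommGroup H] [InnerProductSpace ℂ H] [CompleteSpace H]

open scoped InnerProductSpace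

/-!
Write `φ_n = n^{-β} e_n + n^{-α} e_0` and `W_k = ∑_{n ≤ k} n^{2(β-α)}`, which diverges exactly
because `α - β ≤ 1/2`. The average `u_k = ∑_{n ≤ k} c_n φ_n` with `c_n = n^{2β-α} / W_k` has
`e_0`-coefficient `1`, so `‖u_k - e_0‖² = 1 / W_k`; if an operator `T` sends `φ_n` to an orthogonal
family of norm at most `n^{-β}`, also `‖T u_k‖² ≤ 1 / W_k`. Hence `(e_0, 0)` lies in the closure of
the graph of `T`. For `T = S` this gives `S̄ e_0 = 0`; `S` is closable because its graph lies in the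
closed graph of the diagonal operator `e_m ↦ m^{2β} e_m` (`m ≥ 1`), `e_0 ↦ 0`. For `T = e^{-Q/2}`,
which maps `φ_n` to `e_n` and is closed, it gives `e^{-Q/2} e_0 = 0`, contradicting the injectivity
of `e^{-Q/2}`.
-/

theorem not_summable_rpow_div_rpow_sq {α β : ℝ} (hαβ : α - β ≤ 1 / 2) :
    ¬ Summable fun i : ℕ => (((i + 1 : ℕ) : ℝ) ^ (-α) / ((i + 1 : ℕ) : ℝ) ^ (-β)) ^ 2 := by
  have hterm : ∀ i : ℕ, (((i + 1 : ℕ) : ℝ) ^ (-α) / ((i + 1 : ℕ) : ℝ) ^ (-β)) ^ 2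
      = ((i + 1 : ℕ) : ℝ) ^ (2 * (β - α)) := fun i => by
    have hi : (0 : ℝ) < ((i + 1 : ℕ) : ℝ) := by positivity
    rw [← Real.rpow_sub hi, ← Real.rpow_mul_natCast hi.le]
    ring_nf
  simp only [hterm]
  rw [summable_nat_add_iff 1 (f := fun n : ℕ => (n : ℝ) ^ (2 * (β - α))), Real.summable_nat_rpow]
  linarith

section

variable {𝕜 E F ι : Type*} [RCLike 𝕜] [NormedAddCommGroup E] [InnerProductSpace 𝕜 E]
  [NormedAddCommGroup F] [InnerProductSpace 𝕜 F]

theorem Orthonormal.norm_sum_ofReal_smul_sq {v : ι → E} (hv : Orthonormal 𝕜 v) (s : Finset ι)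
    (d : ι → ℝ) : ‖∑ i ∈ s, (d i : 𝕜) • v i‖ ^ 2 = ∑ i ∈ s, d i ^ 2 := by
  have h := hv.inner_sum (fun i => (d i : 𝕜)) (fun i => (d i : 𝕜)) s
  rw [inner_self_eq_norm_sq_to_K] at h
  simp only [RCLike.conj_ofReal, ← RCLike.ofReal_mul, ← RCLike.ofReal_sum, ← RCLike.ofReal_pow] at h
  simpa only [sq] using RCLike.ofReal_injective h

theorem Dense.eq_zero_of_forall_inner_eq_zero {v : ι → E}
    (hv : Dense (Submodule.span 𝕜 (Set.range v) : Set E)) {y : E} (h : ∀ i, ⟪v i, y⟫_𝕜 = 0) :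
    y = 0 := by
  refine hv.eq_zero_of_inner_left 𝕜 fun u hu => ?_
  have hle : Submodule.span 𝕜 (Set.range v) ≤ LinearMap.ker (innerₛₗ 𝕜 y) := by
    rw [Submodule.span_le]
    rintro _ ⟨i, rfl⟩
    simpa [inner_eq_zero_symm] using h i
  simpa using hle hu

theorem Submodule.exists_mem_norm_sub_sq_le (V : Submodule 𝕜 (E × F)) {f : ι → E} {g : ι → F}
    (hf : Orthonormal 𝕜 f) (hg : Orthonormal 𝕜 g) (x : E) {a b r : ι → ℝ} (ha : ∀ i, 0 < a i)
    (hr : ∀ i, |r i| ≤ a i) (hV : ∀ i, ((a i : 𝕜) • f i + (b i : 𝕜) • x, (r i : 𝕜) • g i) ∈ V)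
    (s : Finset ι) (hs : 0 < ∑ i ∈ s, (b i / a i) ^ 2) :
    ∃ p ∈ V, ‖p.1 - x‖ ^ 2 ≤ (∑ i ∈ s, (b i / a i) ^ 2)⁻¹ ∧
      ‖p.2‖ ^ 2 ≤ (∑ i ∈ s, (b i / a i) ^ 2)⁻¹ := by
  set W := ∑ i ∈ s, (b i / a i) ^ 2
  -- the minimiser of `∑ (c i * a i) ^ 2` under the constraint `∑ c i * b i = 1`
  set c : ι → ℝ := fun i => b i / (a i ^ 2 * W)
  have hcb : ∑ i ∈ s, c i * b i = 1 := by
    rw [← div_self hs.ne', Finset.sum_div]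
    refine Finset.sum_congr rfl fun i _ => ?_
    have hai := (ha i).ne'
    simp only [c]
    field_simp
  have hca : ∑ i ∈ s, (c i * a i) ^ 2 = W⁻¹ := by
    rw [inv_eq_one_div, ← div_self hs.ne', div_div, Finset.sum_div]
    refine Finset.sum_congr rfl fun i _ => ?_
    have hai := (ha i).ne'
    simp only [c]
    field_simp
  refine ⟨∑ i ∈ s, (c i : 𝕜) • ((a i : 𝕜) • f i + (b i : 𝕜) • x, (r i : 𝕜) • g i),
    V.sum_mem fun i _ => V.smul_mem _ (hV i), ?_, ?_⟩
  · have hsub : (∑ i ∈ s, (c i : 𝕜) • ((a i : 𝕜) • f i + (b i : 𝕜) • x, (r i : 𝕜) • g i)).1 - x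
        = ∑ i ∈ s, ((c i * a i : ℝ) : 𝕜) • f i := by
      simp only [Prod.fst_sum, Prod.smul_fst, smul_add, smul_smul, Finset.sum_add_distrib,
        ← Finset.sum_smul, ← RCLike.ofReal_mul, ← RCLike.ofReal_sum, hcb, RCLike.ofReal_one,
        one_smul, add_sub_cancel_right]
    rw [hsub, hf.norm_sum_ofReal_smul_sq, hca]
  · simp only [Prod.snd_sum, Prod.smul_snd, smul_smul, ← RCLike.ofReal_mul]
    rw [hg.norm_sum_ofReal_smul_sq, ← hca]
    refine Finset.sum_le_sum fun i _ => ?_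
    rw [mul_pow, mul_pow, ← sq_abs (r i)]
    gcongr
    exact hr i

theorem Submodule.prod_mem_topologicalClosure_of_not_summable (V : Submodule 𝕜 (E × F))
    {f : ι → E} {g : ι → F} (hf : Orthonormal 𝕜 f) (hg : Orthonormal 𝕜 g) (x : E)
    {a b r : ι → ℝ} (ha : ∀ i, 0 < a i) (hr : ∀ i, |r i| ≤ a i)
    (hV : ∀ i, ((a i : 𝕜) • f i + (b i : 𝕜) • x, (r i : 𝕜) • g i) ∈ V)
    (hab : ¬ Summable fun i => (b i / a i) ^ 2) :
    (x, 0) ∈ V.topologicalClosure := by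
  rw [← SetLike.mem_coe, V.topologicalClosure_coe, Metric.mem_closure_iff]
  intro ε hε
  obtain ⟨s, hs⟩ : ∃ s : Finset ι, (ε ^ 2)⁻¹ < ∑ i ∈ s, (b i / a i) ^ 2 := by
    by_contra! h
    exact hab (summable_of_sum_le (fun i => sq_nonneg _) h)
  have hW : 0 < ∑ i ∈ s, (b i / a i) ^ 2 := (by positivity : (0 : ℝ) < (ε ^ 2)⁻¹).trans hs
  have hWε : (∑ i ∈ s, (b i / a i) ^ 2)⁻¹ < ε ^ 2 := inv_lt_of_inv_lt₀ (by positivity) hs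
  obtain ⟨p, hpV, hp1, hp2⟩ := V.exists_mem_norm_sub_sq_le hf hg x ha hr hV s hW
  refine ⟨p, hpV, ?_⟩
  rw [Prod.dist_eq, max_lt_iff, dist_comm, dist_eq_norm, dist_comm, dist_eq_norm, sub_zero]
  exact ⟨lt_of_pow_lt_pow_left₀ 2 hε.le (hp1.trans_lt hWε),
    lt_of_pow_lt_pow_left₀ 2 hε.le (hp2.trans_lt hWε)⟩

theorem Submodule.prod_mem_topologicalClosure_of_rpow (V : Submodule 𝕜 (E × F)) {e : ℕ → E}
    {g : ℕ → F} (he : Orthonormal 𝕜 e) (hg : Orthonormal 𝕜 g) {α β : ℝ} (hαβ : α - β ≤ 1 / 2)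
    {r : ℕ → ℝ} (hr : ∀ i, |r i| ≤ ((i + 1 : ℕ) : ℝ) ^ (-β))
    (hV : ∀ i, (((((i + 1 : ℕ) : ℝ) ^ (-β) : ℝ) : 𝕜) • e (i + 1)
      + ((((i + 1 : ℕ) : ℝ) ^ (-α) : ℝ) : 𝕜) • e 0, (r i : 𝕜) • g i) ∈ V) :
    (e 0, 0) ∈ V.topologicalClosure :=
  V.prod_mem_topologicalClosure_of_not_summable (he.comp _ (add_left_injective 1)) hg (e 0)
    (fun i => by positivity) hr hV (not_summable_rpow_div_rpow_sq hαβ)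

end

namespace LinearPMap

variable {R E F : Type*} [CommRing R] [AddCommGroup E] [AddCommGroup F] [Module R E] [Module R F]

theorem graph_le_of_domain_eq_span (T : E →ₗ.[R] F) {s : Set E}
    (hT : T.domain = Submodule.span R s) {G : Submodule R (E × F)}
    (hG : ∀ x (hx : x ∈ T.domain), x ∈ s → (x, T ⟨x, hx⟩) ∈ G) : T.graph ≤ G := by
  intro p hp
  obtain ⟨⟨x, hx⟩, rfl⟩ := T.mem_graph_iff'.1 hp
  have hxs : x ∈ Submodule.span R s := hT ▸ hx
  clear hp
  induction hxs using Submodule.span_induction with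
  | mem x hxs => exact hG x hx hxs
  | zero =>
    rw [show T ⟨0, hx⟩ = 0 from T.map_zero]
    exact G.zero_mem
  | add y z hy hz ihy ihz =>
    have hy' : y ∈ T.domain := hT ▸ hy
    have hz' : z ∈ T.domain := hT ▸ hz
    rw [show (⟨y + z, hx⟩ : T.domain) = ⟨y, hy'⟩ + ⟨z, hz'⟩ from rfl, T.map_add]
    exact G.add_mem (ihy hy') (ihz hz')
  | smul c y hy ihy =>
    have hy' : y ∈ T.domain := hT ▸ hy
    rw [show (⟨c • y, hx⟩ : T.domain) = c • ⟨y, hy'⟩ from rfl, T.map_smul]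
    exact G.smul_mem c (ihy hy')

variable [TopologicalSpace E] [TopologicalSpace F] [ContinuousAdd E] [ContinuousAdd F]
  [TopologicalSpace R] [ContinuousSMul R E] [ContinuousSMul R F]

theorem isClosable_of_graph_le (T : E →ₗ.[R] F) {G : Submodule R (E × F)}
    (hG : _root_.IsClosed (G : Set (E × F))) (hTG : T.graph ≤ G)
    (hG₀ : ∀ p ∈ G, p.1 = 0 → p.2 = 0) : T.IsClosable :=
  ⟨T.graph.topologicalClosure.toLinearPMap, (Submodule.toLinearPMap_graph_eq _
    fun p hp hp₁ => hG₀ p (T.graph.topologicalClosure_minimal hTG hG hp) hp₁).symm⟩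

end LinearPMap

section Diagonal

variable {𝕜 E ι : Type*} [RCLike 𝕜] [NormedAddCommGroup E] [InnerProductSpace 𝕜 E]

/-- The graph of the maximal operator that is diagonal in the family `v`, with `v i ↦ w i • v i`. -/
def diagonalGraph (v : ι → E) (w : ι → 𝕜) : Submodule 𝕜 (E × E) :=
  ⨅ i, LinearMap.ker (((innerSL 𝕜 (v i)).comp (ContinuousLinearMap.snd 𝕜 E E)
    - w i • (innerSL 𝕜 (v i)).comp (ContinuousLinearMap.fst 𝕜 E E) : E × E →L[𝕜] 𝕜) :
      E × E →ₗ[𝕜] 𝕜)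

theorem mem_diagonalGraph {v : ι → E} {w : ι → 𝕜} {p : E × E} :
    p ∈ diagonalGraph v w ↔ ∀ i, ⟪v i, p.2⟫_𝕜 = w i * ⟪v i, p.1⟫_𝕜 := by
  simp [diagonalGraph, sub_eq_zero]

theorem isClosed_diagonalGraph (v : ι → E) (w : ι → 𝕜) :
    IsClosed (diagonalGraph v w : Set (E × E)) := by
  rw [diagonalGraph, Submodule.coe_iInf]
  exact isClosed_iInter fun i => ContinuousLinearMap.isClosed_ker _

theorem snd_eq_zero_of_mem_diagonalGraph {v : ι → E} {w : ι → 𝕜}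
    (hv : Dense (Submodule.span 𝕜 (Set.range v) : Set E)) {p : E × E}
    (hp : p ∈ diagonalGraph v w) (hp₁ : p.1 = 0) : p.2 = 0 :=
  hv.eq_zero_of_forall_inner_eq_zero fun i => by simp [mem_diagonalGraph.1 hp i, hp₁]

theorem smul_add_smul_mem_diagonalGraph {v : ι → E} (hv : Orthonormal 𝕜 v) {w : ι → 𝕜}
    {n k : ι} (hnk : n ≠ k) (hk : w k = 0) (a b : 𝕜) :
    (a • v n + b • v k, (w n * a) • v n) ∈ diagonalGraph v w := by
  classical
  rw [mem_diagonalGraph]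
  intro m
  simp only [inner_add_right, inner_smul_right, orthonormal_iff_ite.1 hv]
  by_cases hmn : m = n
  · subst hmn
    simp [hnk]
  · by_cases hmk : m = k
    · subst hmk
      simp [hk, hmn]
    · simp [hmn, hmk]

end Diagonal

section

variable {E : Type*} [NormedAddCommGroup E] [InnerProductSpace ℂ E] {ee : ℕ → E} {α β : ℝ}
  {S : E →ₗ.[ℂ] E}

theorem graph_le_diagonalGraph_of_rpow (hee : Orthonormal ℂ ee)
    (hdom : S.domain = Submodule.span ℂ
      ((fun n : ℕ => ((((n : ℝ) ^ (-β) : ℝ)) : ℂ) • ee n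
          + ((((n : ℝ) ^ (-α) : ℝ)) : ℂ) • ee 0) '' {n : ℕ | 1 ≤ n}))
    (hS : ∀ n : ℕ, 1 ≤ n → ∃ h : ((((n : ℝ) ^ (-β) : ℝ)) : ℂ) • ee n
          + ((((n : ℝ) ^ (-α) : ℝ)) : ℂ) • ee 0 ∈ S.domain,
        S ⟨_, h⟩ = ((((n : ℝ) ^ β : ℝ)) : ℂ) • ee n) :
    S.graph ≤ diagonalGraph ee fun m => if m = 0 then 0 else (((m : ℝ) ^ (2 * β) : ℝ) : ℂ) := by
  refine S.graph_le_of_domain_eq_span hdom ?_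
  rintro _ - ⟨n, hn : 1 ≤ n, rfl⟩
  obtain ⟨_, hSn⟩ := hS n hn
  have hw : ((((n : ℝ) ^ β : ℝ)) : ℂ)
      = (if n = 0 then 0 else (((n : ℝ) ^ (2 * β) : ℝ) : ℂ)) * ((((n : ℝ) ^ (-β) : ℝ)) : ℂ) := by
    have hn₀ : (0 : ℝ) < n := by exact_mod_cast hn
    rw [if_neg (by omega), ← Complex.ofReal_mul, ← Real.rpow_add hn₀]
    ring_nf
  rw [hSn, hw]
  exact smul_add_smul_mem_diagonalGraph hee (by omega) rfl _ _

theorem prod_mem_topologicalClosure_graph_of_rpow (hee : Orthonormal ℂ ee) (hβ : β ≤ 0)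
    (hαβ : α - β ≤ 1 / 2)
    (hS : ∀ n : ℕ, 1 ≤ n → ∃ h : ((((n : ℝ) ^ (-β) : ℝ)) : ℂ) • ee n
          + ((((n : ℝ) ^ (-α) : ℝ)) : ℂ) • ee 0 ∈ S.domain,
        S ⟨_, h⟩ = ((((n : ℝ) ^ β : ℝ)) : ℂ) • ee n) :
    (ee 0, 0) ∈ S.graph.topologicalClosure := by
  refine S.graph.prod_mem_topologicalClosure_of_rpow hee (hee.comp _ (add_left_injective 1)) hαβ
    (r := fun i => ((i + 1 : ℕ) : ℝ) ^ β) (fun i => ?_) fun i => ?_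
  · rw [abs_of_nonneg (by positivity)]
    exact Real.rpow_le_rpow_of_exponent_le (by simp) (by linarith)
  · obtain ⟨h, hSi⟩ := hS (i + 1) (by omega)
    exact hSi ▸ S.mem_graph ⟨_, h⟩

end

theorem not_isGRS_rpow {ee : ℕ → H} (hee : Orthonormal ℂ ee) {α β : ℝ} (hβ : β ≤ 0)
    (hαβ : α - β ≤ 1 / 2) :
    ¬ IsGRS (fun n : ℕ => ((((n + 1 : ℕ) : ℝ) ^ (-β) : ℝ) : ℂ) • ee (n + 1)
        + ((((n + 1 : ℕ) : ℝ) ^ (-α) : ℝ) : ℂ) • ee 0) := by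
  rintro ⟨E, F, e, -, hF, -, -, hFE, hEF, ⟨he, -⟩, hφ⟩
  have hF₀ : (ee 0, 0) ∈ F.graph := by
    rw [← IsClosed.submodule_topologicalClosure_eq hF.isClosed]
    refine F.graph.prod_mem_topologicalClosure_of_rpow hee he hαβ (r := fun _ => 1)
      (fun i => by simpa using Real.one_le_rpow (by simp) (by linarith)) fun i => ?_
    obtain ⟨h₁, -, hφi⟩ := hφ i
    obtain ⟨h₂, hFEi⟩ := hFE ⟨e i, h₁⟩
    have hφF : (E ⟨e i, h₁⟩, e i) ∈ F.graph := by
      have := F.mem_graph ⟨_, h₂⟩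
      rwa [hFEi] at this
    simpa [← hφi] using hφF
  obtain ⟨⟨y, hy⟩, rfl, hFy⟩ := F.mem_graph_iff.1 hF₀
  obtain ⟨h, hEFy⟩ := hEF ⟨_, hy⟩
  rw [show (⟨F ⟨_, hy⟩, h⟩ : E.domain) = 0 from Subtype.ext hFy, E.map_zero] at hEFy
  exact hee.ne_zero 0 hEFy.symm

/-- Let `φ_n = n^{-β} ee_n + n^{-α} ee_0` (`n ≥ 1`) with `β ≤ 0` and `α - β ≤ 1/2`, and let `S`
be the operator `Sφ_n = n^{β} ee_n` on `span{φ_n}`.  Then the closure `S̄` of `S` annihilates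
`ee_0`; consequently `S̄` is not positive and `{φ_n}` is a semi-regular sequence which is not a
generalized Riesz system. -/
theorem closure_kills_e0_not_GRS
    (ee : ℕ → H) (hee : IsONB ee) (α β : ℝ) (hβ : β ≤ 0) (hαβ : α - β ≤ 1 / 2)
    (S : H →ₗ.[ℂ] H)
    (hdom : S.domain = Submodule.span ℂ
      ((fun n : ℕ => ((((n : ℝ) ^ (-β) : ℝ)) : ℂ) • ee n
          + ((((n : ℝ) ^ (-α) : ℝ)) : ℂ) • ee 0) '' {n : ℕ | 1 ≤ n}))
    (hS : ∀ n : ℕ, 1 ≤ n → ∃ h : ((((n : ℝ) ^ (-β) : ℝ)) : ℂ) • ee n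
          + ((((n : ℝ) ^ (-α) : ℝ)) : ℂ) • ee 0 ∈ S.domain,
        S ⟨_, h⟩ = ((((n : ℝ) ^ β : ℝ)) : ℂ) • ee n) :
    S.IsClosable ∧
    (∃ h0 : ee 0 ∈ S.closure.domain, S.closure ⟨ee 0, h0⟩ = 0) ∧
    ¬ S.closure.IsPositive ∧
    ¬ IsGRS (fun n : ℕ => ((((n + 1 : ℕ) : ℝ) ^ (-β) : ℝ) : ℂ) • ee (n + 1)
        + ((((n + 1 : ℕ) : ℝ) ^ (-α) : ℝ) : ℂ) • ee 0) := by
  obtain ⟨heo, hdense⟩ := hee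
  have hcl : S.IsClosable :=
    S.isClosable_of_graph_le (isClosed_diagonalGraph _ _)
      (graph_le_diagonalGraph_of_rpow heo hdom hS) fun _ hp hp₁ => snd_eq_zero_of_mem_diagonalGraph hdense hp hp₁
  have hS₀ := prod_mem_topologicalClosure_graph_of_rpow heo hβ hαβ hS
  rw [hcl.graph_closure_eq_closure_graph] at hS₀
  obtain ⟨⟨x, hx⟩, rfl, hSx⟩ := S.closure.mem_graph_iff.1 hS₀
  refine ⟨hcl, ⟨hx, hSx⟩, fun hpos => ?_, not_isGRS_rpow heo hβ hαβ⟩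
  simpa [hSx] using hpos ⟨_, hx⟩ (heo.ne_zero 0)
end
end

section
/- Let {𝖾_n}_{n≥0} be an orthonormal basis of H with J𝖾_n = (-1)^n𝖾_n, let {α_k} be strictly increasing nonnegative reals tending to ∞, T the associated contraction (T𝖾_{2k} = tanh α_k 𝖾_{2k+1}, T𝖾_{2k+1} = tanh α_k 𝖾_{2k}), H_± the closed spans of even/odd basis vectors, 𝔏_± = (I+T)H_±, χ = Σ_k χ_k 𝖾_{2k+1} with {χ_k} ∈ ℓ², all χ_k ≠ 0, M_- = {g ∈ H_- : ⟨g,χ⟩ = 0}, and 𝔏_-^0 = (I+T)M_-. Then 𝔏_+ + 𝔏_-^0 is dense in H if and only if {χ_n cosh²α_n} ∉ ℓ²(ℕ). -/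
/-!
Write `a_k = ⟪e_{2k}, h⟫` and `b_k = ⟪e_{2k+1}, h⟫`. A vector `h` is orthogonal to `(I+T)H_+`
iff `a_k + tanh α_k b_k = 0` for all `k`. Since `M_-` is the kernel of `⟪χ, ·⟫` in `H_-`, `h` is
orthogonal to `(I+T)M_-` iff `b_k + tanh α_k a_k = c χ_k` for one constant `c`. As
`1 - tanh² = cosh⁻²`, the solutions are `b_k = c χ_k cosh² α_k`, `a_k = -tanh α_k b_k`, i.e.
`h = c (I - T) f` with `f_k = χ_k cosh² α_k`; a nonzero such `h` exists in `H` iff `f ∈ ℓ²`.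
-/

open scoped ComplexInnerProductSpace
open Filter

noncomputable section

variable {H : Type*} [NormedAddCommGroup H] [InnerProductSpace ℂ H] [CompleteSpace H]

theorem Real.one_sub_tanh_sq_mul_cosh_sq (x : ℝ) : (1 - tanh x ^ 2) * cosh x ^ 2 = 1 := by
  rw [tanh_eq_sinh_div_cosh, div_pow, sub_mul, div_mul_cancel₀ _ (pow_ne_zero 2 (cosh_pos x).ne'),
    one_mul, cosh_sq_sub_sinh_sq]

theorem tanh_linear_system_iff (x : ℝ) (a b c z : ℂ) :
    (a + Real.tanh x * b = 0 ∧ b + Real.tanh x * a = c * z) ↔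
      (a = c * (-Real.tanh x * (z * (Real.cosh x ^ 2 : ℝ))) ∧
        b = c * (z * (Real.cosh x ^ 2 : ℝ))) := by
  have key : (1 - (Real.tanh x : ℂ) ^ 2) * (Real.cosh x ^ 2 : ℝ) = 1 := by
    exact_mod_cast Real.one_sub_tanh_sq_mul_cosh_sq x
  constructor
  · rintro ⟨h1, h2⟩
    have hb : b = c * (z * (Real.cosh x ^ 2 : ℝ)) := by
      linear_combination (-b) * key + (Real.cosh x ^ 2 : ℝ) * h2 -
        (Real.cosh x ^ 2 : ℝ) * Real.tanh x * h1
    exact ⟨by linear_combination h1 - Real.tanh x * hb, hb⟩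
  · rintro ⟨ha, hb⟩
    exact ⟨by linear_combination ha + Real.tanh x * hb,
      by linear_combination hb + Real.tanh x * ha + c * z * key⟩

theorem memℓp_sum_elim_iff {α β E : Type*} [NormedAddCommGroup E] {p : ENNReal}
    (hp : 0 < p.toReal) {u : α → E} {w : β → E} :
    Memℓp (Sum.elim u w) p ↔ Memℓp u p ∧ Memℓp w p := by
  simp only [memℓp_gen_iff hp]
  refine ⟨fun h => ⟨?_, ?_⟩, fun ⟨hu, hw⟩ => Summable.sum _ hu hw⟩
  · simpa [Function.comp_def] using h.comp_injective Sum.inl_injective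
  · simpa [Function.comp_def] using h.comp_injective Sum.inr_injective

section InnerProductSpace

open scoped InnerProductSpace

variable {𝕜 E F ι : Type*} [RCLike 𝕜] [NormedAddCommGroup E] [InnerProductSpace 𝕜 E]
  [NormedAddCommGroup F] [InnerProductSpace 𝕜 F]

theorem ContinuousLinearMap.map_eq_zero_of_mem_closure_span (φ : E →L[𝕜] F) {v : ι → E}
    (hv : ∀ i, φ (v i) = 0) {x : E}
    (hx : x ∈ (Submodule.span 𝕜 (Set.range v)).topologicalClosure) : φ x = 0 :=
  Submodule.topologicalClosure_minimal _ (Submodule.span_le.2 (Set.range_subset_iff.2 hv))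
    φ.isClosed_ker hx

theorem inner_one_add_apply_left_of_apply_eq_smul [Module ℝ E] [IsScalarTower ℝ 𝕜 E]
    {T : E →L[𝕜] E} {x y : E} {r : ℝ} (hT : T x = r • y) (z : E) :
    ⟪(1 + T) x, z⟫_𝕜 = ⟪x, z⟫_𝕜 + r * ⟪y, z⟫_𝕜 := by
  rw [add_apply, one_apply_eq_self, hT, inner_add_left,
    RCLike.real_smul_eq_coe_smul (K := 𝕜), inner_smul_left, RCLike.conj_ofReal]

theorem Orthonormal.inner_tsum_smul_right [CompleteSpace E] {v : ι → E} (hv : Orthonormal 𝕜 v)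
    {f : ι → 𝕜} (hf : Memℓp f 2) (j : ι) : ⟪v j, ∑' i, f i • v i⟫_𝕜 = f j := by
  classical
  have hs : Summable fun i => f i • v i := by
    simpa [LinearIsometry.toSpanSingleton] using
      (hv.orthogonalFamily.summable_iff_norm_sq_summable f).2
        (by simpa using hf.summable (p := 2) (by norm_num))
  rw [← innerSL_apply_apply, (innerSL 𝕜 (v j)).map_tsum hs]
  simp [orthonormal_iff_ite.1 hv]

theorem mem_orthogonal_map_closure_span_iff {A : E →L[𝕜] F} {v : ι → E} {h : F} :
    h ∈ (Submodule.map A.toLinearMap (Submodule.span 𝕜 (Set.range v)).topologicalClosure)ᗮ ↔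
      ∀ i, ⟪A (v i), h⟫_𝕜 = 0 := by
  refine ⟨fun hh i => hh _ ⟨v i, Submodule.le_topologicalClosure _
    (Submodule.subset_span ⟨i, rfl⟩), rfl⟩, fun hv => ?_⟩
  rintro _ ⟨x, hx, rfl⟩
  rw [inner_eq_zero_symm]
  exact ((innerSL 𝕜 h).comp A).map_eq_zero_of_mem_closure_span
    (fun i => inner_eq_zero_symm.1 (hv i)) hx

theorem mem_orthogonal_map_closure_span_inf_ker_iff {A : E →L[𝕜] F} {w : ι → E} {u : E}
    {h : F} {i : ι} (hi : ⟪w i, u⟫_𝕜 ≠ 0) :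
    h ∈ (Submodule.map A.toLinearMap ((Submodule.span 𝕜 (Set.range w)).topologicalClosure ⊓
      LinearMap.ker (innerSL 𝕜 u).toLinearMap))ᗮ ↔
      ∃ c : 𝕜, ∀ j, ⟪A (w j), h⟫_𝕜 = c * ⟪w j, u⟫_𝕜 := by
  have hw : ∀ j, w j ∈ (Submodule.span 𝕜 (Set.range w)).topologicalClosure := fun j =>
    Submodule.le_topologicalClosure _ (Submodule.subset_span ⟨j, rfl⟩)
  constructor
  · intro hh
    refine ⟨⟪A (w i), h⟫_𝕜 / ⟪w i, u⟫_𝕜, fun j => ?_⟩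
    -- test `h` against the image of the combination of `w i`, `w j` orthogonal to `u`
    set g := ⟪u, w i⟫_𝕜 • w j - ⟪u, w j⟫_𝕜 • w i
    have hg : ⟪u, g⟫_𝕜 = 0 := by simp only [g, inner_sub_right, inner_smul_right]; ring
    have := hh (A g) ⟨g, ⟨Submodule.sub_mem _ (Submodule.smul_mem _ _ (hw j))
      (Submodule.smul_mem _ _ (hw i)), hg⟩, rfl⟩
    simp only [g, map_sub, map_smul, inner_sub_left, inner_smul_left, inner_conj_symm] at this
    field_simp
    linear_combination this
  · rintro ⟨c, hc⟩ _ ⟨x, ⟨hxK, hxu⟩, rfl⟩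
    have hφ := ((innerSL 𝕜 h).comp A - starRingEnd 𝕜 c • innerSL 𝕜 u)
      |>.map_eq_zero_of_mem_closure_span
        (fun j => by simp [← inner_conj_symm h, hc, inner_conj_symm]) hxK
    have hxu : ⟪u, x⟫_𝕜 = 0 := hxu
    simp only [sub_apply, smul_apply, innerSL_apply_apply, ContinuousLinearMap.comp_apply, hxu,
      smul_zero, sub_zero] at hφ
    exact inner_eq_zero_symm.1 hφ

theorem HilbertBasis.exists_ne_zero_forall_inner_eq_mul_iff (b : HilbertBasis ι 𝕜 E)
    {φ : ι → 𝕜} (hφ : φ ≠ 0) :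
    (∃ h ≠ (0 : E), ∃ c : 𝕜, ∀ i, ⟪b i, h⟫_𝕜 = c * φ i) ↔ Memℓp φ 2 := by
  constructor
  · rintro ⟨h, hh0, c, hc⟩
    have hc0 : c ≠ 0 := by
      rintro rfl
      refine hh0 (b.repr.injective ?_)
      ext i
      simp [b.repr_apply_apply, hc]
    have : φ = c⁻¹ • ⇑(b.repr h) := by
      ext i
      simp [b.repr_apply_apply, hc, hc0]
    exact this ▸ (lp.memℓp _).const_smul _
  · intro hφ2
    refine ⟨b.repr.symm ⟨φ, hφ2⟩, fun h0 => hφ ?_, 1, fun i => ?_⟩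
    · exact congrArg (fun x : lp (fun _ : ι => 𝕜) 2 => (x : ι → 𝕜))
        (b.repr.symm.map_eq_zero_iff.1 h0)
    · rw [← b.repr_apply_apply, LinearIsometryEquiv.apply_symm_apply, one_mul]

end InnerProductSpace

/-- The coordinates of `(I - T) f`, `f = ∑ f k • ee (2 * k + 1)`, along `ee (2 * k)` (`inl k`)
and `ee (2 * k + 1)` (`inr k`). -/
def oneSubTCoeff (α : ℕ → ℝ) (f : ℕ → ℂ) : ℕ ⊕ ℕ → ℂ :=
  Sum.elim (fun k => -Real.tanh (α k) * f k) f

theorem memℓp_oneSubTCoeff_iff {α : ℕ → ℝ} {f : ℕ → ℂ} :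
    Memℓp (oneSubTCoeff α f) 2 ↔ Memℓp f 2 := by
  rw [oneSubTCoeff, memℓp_sum_elim_iff (by norm_num), and_iff_right_iff_imp]
  refine fun hf => hf.mono' fun k => ?_
  rw [norm_mul, norm_neg, Complex.norm_real, Real.norm_eq_abs]
  exact mul_le_of_le_one_left (norm_nonneg _) (Real.abs_tanh_lt_one _).le

theorem mem_orthogonal_iff_exists_inner_eq_mul_oneSubTCoeff {ee : ℕ → H}
    (hon : Orthonormal ℂ ee) {α : ℕ → ℝ} {T : H →L[ℂ] H}
    (hTe : ∀ k : ℕ, T (ee (2 * k)) = (Real.tanh (α k) : ℝ) • ee (2 * k + 1) ∧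
      T (ee (2 * k + 1)) = (Real.tanh (α k) : ℝ) • ee (2 * k))
    {χ : ℕ → ℂ} (hχ2 : Memℓp χ 2) (hχ0 : χ 0 ≠ 0) {h : H} :
    h ∈ (Submodule.map (1 + T : H →L[ℂ] H).toLinearMap
          ((Submodule.span ℂ (Set.range fun k : ℕ => ee (2 * k))).topologicalClosure) ⊔
        Submodule.map (1 + T : H →L[ℂ] H).toLinearMap
          ((Submodule.span ℂ (Set.range fun k : ℕ => ee (2 * k + 1))).topologicalClosure
            ⊓ LinearMap.ker (innerSL ℂ (∑' k : ℕ, χ k • ee (2 * k + 1))).toLinearMap))ᗮ ↔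
      ∃ c : ℂ, ∀ i, ⟪ee (Equiv.natSumNatEquivNat i), h⟫ =
        c * oneSubTCoeff α (fun k => χ k * (Real.cosh (α k) ^ 2 : ℝ)) i := by
  have hχ : ∀ j, ⟪ee (2 * j + 1), ∑' k : ℕ, χ k • ee (2 * k + 1)⟫ = χ j :=
    (hon.comp _ fun _ _ h => by omega).inner_tsum_smul_right hχ2
  have heven k : ⟪(1 + T) (ee (2 * k)), h⟫ =
      ⟪ee (2 * k), h⟫ + Real.tanh (α k) * ⟪ee (2 * k + 1), h⟫ :=
    inner_one_add_apply_left_of_apply_eq_smul (hTe k).1 h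
  have hodd k : ⟪(1 + T) (ee (2 * k + 1)), h⟫ =
      ⟪ee (2 * k + 1), h⟫ + Real.tanh (α k) * ⟪ee (2 * k), h⟫ :=
    inner_one_add_apply_left_of_apply_eq_smul (hTe k).2 h
  rw [← Submodule.inf_orthogonal, Submodule.mem_inf, mem_orthogonal_map_closure_span_iff,
    mem_orthogonal_map_closure_span_inf_ker_iff (i := 0) (by rwa [hχ])]
  simp only [heven, hodd, hχ, Sum.forall, Equiv.natSumNatEquivNat_apply, Sum.elim_inl,
    Sum.elim_inr, oneSubTCoeff, ← exists_and_left, ← forall_and]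
  exact exists_congr fun c => forall_congr' fun k => tanh_linear_system_iff _ _ _ _ _

theorem dense_sum_iff_not_memlp_general
    (ee : ℕ → H) (hee : IsONB ee)
    (α : ℕ → ℝ)
    (T : H →L[ℂ] H)
    (hTe : ∀ k : ℕ, T (ee (2 * k)) = (Real.tanh (α k) : ℝ) • ee (2 * k + 1) ∧
      T (ee (2 * k + 1)) = (Real.tanh (α k) : ℝ) • ee (2 * k))
    (χ : ℕ → ℂ) (hχ2 : Memℓp χ 2) (hχne : ∀ k, χ k ≠ 0) :
    Dense ((↑(
        Submodule.map (1 + T : H →L[ℂ] H).toLinearMap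
          ((Submodule.span ℂ (Set.range fun k : ℕ => ee (2 * k))).topologicalClosure)
        ⊔
        Submodule.map (1 + T : H →L[ℂ] H).toLinearMap
          ((Submodule.span ℂ (Set.range fun k : ℕ => ee (2 * k + 1))).topologicalClosure
            ⊓ LinearMap.ker (innerSL ℂ (∑' k : ℕ, χ k • ee (2 * k + 1))).toLinearMap)
        : Submodule ℂ H) : Set H))
    ↔ ¬ Memℓp (fun n => χ n * ((Real.cosh (α n) ^ 2 : ℝ) : ℂ)) 2 := by
  obtain ⟨hon, hspan⟩ := hee
  let b : HilbertBasis (ℕ ⊕ ℕ) ℂ H :=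
    HilbertBasis.mk (hon.comp _ Equiv.natSumNatEquivNat.injective) <| by
      rw [Set.range_comp, Equiv.range_eq_univ, Set.image_univ,
        Submodule.dense_iff_topologicalClosure_eq_top.1 hspan]
  have hcoeff : oneSubTCoeff α (fun k => χ k * (Real.cosh (α k) ^ 2 : ℝ)) ≠ 0 :=
    Function.ne_iff.2 ⟨.inr 0, mul_ne_zero (hχne 0) (Complex.ofReal_ne_zero.2 (by positivity))⟩
  rw [Submodule.dense_iff_topologicalClosure_eq_top, Submodule.topologicalClosure_eq_top_iff,
    ← not_iff_not, not_not, ← Ne, Submodule.ne_bot_iff, ← memℓp_oneSubTCoeff_iff (α := α),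
    ← b.exists_ne_zero_forall_inner_eq_mul_iff hcoeff]
  simp only [b, HilbertBasis.coe_mk, Function.comp_apply,
    mem_orthogonal_iff_exists_inner_eq_mul_oneSubTCoeff hon hTe hχ2 (hχne 0)]
  exact exists_congr fun _ => and_comm

/-- With `T` the blockwise contraction built from `tanh α_k`, `H_±` the closed spans of the
even/odd basis vectors, `𝔏_+ = (I+T)H_+`, `χ = Σ_k χ_k ee_{2k+1}` with `{χ_k} ∈ ℓ²` and all
`χ_k ≠ 0`, `M_- = {g ∈ H_- : ⟨χ, g⟩ = 0}` and `𝔏_-⁰ = (I+T)M_-`: the sum `𝔏_+ + 𝔏_-⁰` is dense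
in `H` if and only if `{χ_n cosh²α_n} ∉ ℓ²(ℕ)`. -/
theorem dense_sum_iff_not_memlp
    (ee : ℕ → H) (hee : IsONB ee)
    (α : ℕ → ℝ) (hα0 : 0 ≤ α 0) (hmono : StrictMono α) (htop : Tendsto α atTop atTop)
    (T : H →L[ℂ] H)
    (hTe : ∀ k : ℕ, T (ee (2 * k)) = (Real.tanh (α k) : ℝ) • ee (2 * k + 1) ∧
      T (ee (2 * k + 1)) = (Real.tanh (α k) : ℝ) • ee (2 * k))
    (χ : ℕ → ℂ) (hχ2 : Memℓp χ 2) (hχne : ∀ k, χ k ≠ 0) :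
    Dense ((↑(
        Submodule.map (1 + T : H →L[ℂ] H).toLinearMap
          ((Submodule.span ℂ (Set.range fun k : ℕ => ee (2 * k))).topologicalClosure)
        ⊔
        Submodule.map (1 + T : H →L[ℂ] H).toLinearMap
          ((Submodule.span ℂ (Set.range fun k : ℕ => ee (2 * k + 1))).topologicalClosure
            ⊓ LinearMap.ker (innerSL ℂ (∑' k : ℕ, χ k • ee (2 * k + 1))).toLinearMap)
        : Submodule ℂ H) : Set H))
    ↔ ¬ Memℓp (fun n => χ n * ((Real.cosh (α n) ^ 2 : ℝ) : ℂ)) 2 :=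
  dense_sum_iff_not_memlp_general ee hee α T hTe χ hχ2 hχne
end
end
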